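/- arXiv:1911.10485 — 5 statements merged into one kernel-verified Lean document; each statement's English description precedes it below -/
import Mathlib

section
/- In any coloring of the points of a finite projective plane with three colors such that every line contains at most 2 colors (no line contains points of all three colors), there exists a color class that is contained in a single line. -/
open Set

variable {α : Type*}

/-- The ground set of the matroid `M` can be partitioned into `k` independent sets. -/
def Matroid.IsColorable (M : Matroid α) (k : ℕ) : Prop :=
  ∃ I : Fin k → Set α, (∀ i, M.Indep (I i)) ∧ (⋃ i, I i) = M.E ∧
    Pairwise fun i j => Disjoint (I i) (I j)

/-- The coloring number of the matroid `M`: the minimum number of independent sets into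
which the ground set can be partitioned. -/
noncomputable def Matroid.chi (M : Matroid α) : ℕ := sInf {k | M.IsColorable k}

/-- The (extended, cardinality-valued) rank of the matroid `M`. -/
noncomputable def Matroid.rkE (M : Matroid α) : ℕ∞ := ⨆ I ∈ {I | M.Indep I}, I.encard

/-- `N` is the partition matroid determined by the partition `P` of its ground set:
a set is independent iff it meets every class of `P` in at most one element. -/
def Matroid.IsPartitionMatroid (N : Matroid α) (P : Set (Set α)) : Prop :=
  ⋃₀ P = N.E ∧ (∀ c ∈ P, ∀ c' ∈ P, c ≠ c' → Disjoint c c') ∧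
    ∀ X, N.Indep X ↔ X ⊆ N.E ∧ ∀ c ∈ P, (X ∩ c).encard ≤ 1

/-- `N` is a reduction of `M` (written `N ⪯ M`): every `N`-independent set is
`M`-independent. -/
def Matroid.Reduction (N M : Matroid α) : Prop :=
  N.E = M.E ∧ ∀ I, N.Indep I → M.Indep I

/-- `M` is a paving matroid of rank `r`: it has rank `r` and every subset of the ground
set of size at most `r - 1` is independent. -/
def Matroid.IsPavingOfRank (M : Matroid α) (r : ℕ) : Prop :=
  M.rkE = (r : ℕ∞) ∧ ∀ X ⊆ M.E, X.encard ≤ ((r - 1 : ℕ) : ℕ∞) → M.Indep X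

/-- A cut (cocircuit) of the matroid `M`: an inclusionwise minimal subset of the ground
set intersecting every basis. -/
def Matroid.IsCut (M : Matroid α) (X : Set α) : Prop :=
  X ⊆ M.E ∧ (∀ B, M.IsBase B → (X ∩ B).Nonempty) ∧
    ∀ Y, Y ⊂ X → ∃ B, M.IsBase B ∧ Y ∩ B = ∅

/-!
Suppose no colour class lies on a line. Take points `x, y, z` of the colours `i, j, k` and write
`⟨i | p⟩` for the number of lines through `p` meeting the class `Xᵢ` of colour `i`. A line
carrying colours `i` and `j` meets `Xᵢ` in exactly `⟨i | z⟩` points, `z` being of the third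
colour: projecting from `z`, which lies off the line, every line through `z` that meets `Xᵢ`
meets the line in a point of colour `i`. Counting `Xᵢ` along the lines through `y`, and
`Xᵢ \ {x}` along the lines through `x` (each of which meets the line `yz`, hence meets `Xⱼ` or
`Xₖ`, but not both), gives
  `|Xᵢ| = ⟨i | y⟩ ⟨i | z⟩` and `|Xᵢ| - 1 = ⟨j | x⟩ (⟨i | z⟩ - 1) + ⟨k | x⟩ (⟨i | y⟩ - 1)`,
so `(⟨i | z⟩ - 1) (⟨i | y⟩ - ⟨j | x⟩) = (⟨i | y⟩ - 1) (⟨k | x⟩ - 1) > 0` and `⟨j | x⟩ < ⟨i | y⟩`.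
Exchanging the roles of `x` and `y` gives the opposite inequality.
-/

theorem finsum_mem_const_eq_ncard_mul {ι : Type*} (s : Set ι) (n : ℕ) :
    ∑ᶠ _ ∈ s, n = s.ncard * n := by
  rw [← finsum_one, finsum_mem_mul]
  simp

theorem Nat.lt_of_eq_mul_of_sub_one_eq {n a b c d : ℕ} (ha : 1 ≤ a) (hb : 2 ≤ b) (hd : 2 ≤ d)
    (h₁ : n = b * a) (h₂ : n - 1 = c * (a - 1) + d * (b - 1)) : c < b := by
  subst h₁
  zify [ha, one_le_two.trans hb, one_le_mul (one_le_two.trans hb) ha] at h₂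
  by_contra! hbc
  nlinarith [mul_le_mul_of_nonneg_right (Nat.cast_le.2 hbc : (b : ℤ) ≤ c)
    (sub_nonneg.2 (Nat.one_le_cast.2 ha : (1 : ℤ) ≤ a))]

variable {κ : Type*}

/-- Axioms (P1) and (P2) of a projective plane, without the nondegeneracy axiom (P3). -/
structure IsWeakProjectivePlane (S : Set α) (L : Set (Set α)) : Prop where
  subset : ∀ ℓ ∈ L, ℓ ⊆ S
  existsUnique_line : ∀ p ∈ S, ∀ q ∈ S, p ≠ q → ∃! ℓ, ℓ ∈ L ∧ p ∈ ℓ ∧ q ∈ ℓ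
  inter_nonempty : ∀ ℓ ∈ L, ∀ ℓ' ∈ L, ℓ ≠ ℓ' → (ℓ ∩ ℓ').Nonempty

def LinesTwoColored (L : Set (Set α)) (c : α → κ) : Prop :=
  ∀ ℓ ∈ L, ∀ x ∈ ℓ, ∀ y ∈ ℓ, ∀ z ∈ ℓ, c x ≠ c y → c z = c x ∨ c z = c y

def colorClass (S : Set α) (c : α → κ) (i : κ) : Set α := {p ∈ S | c p = i}

theorem colorClass_subset {S : Set α} {c : α → κ} {i : κ} : colorClass S c i ⊆ S :=
  fun _ h => h.1

theorem mem_colorClass_self {S : Set α} {c : α → κ} {x : α} (hx : x ∈ S) :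
    x ∈ colorClass S c (c x) :=
  ⟨hx, rfl⟩

def pencilMeeting (L : Set (Set α)) (p : α) (T : Set α) : Set (Set α) :=
  {ℓ ∈ L | p ∈ ℓ ∧ (ℓ ∩ T).Nonempty}

theorem linesTwoColored_of_forall_exists_ne {L : Set (Set α)} {c : α → Fin 3}
    (hc : ∀ ℓ ∈ L, ∃ i : Fin 3, ∀ p ∈ ℓ, c p ≠ i) : LinesTwoColored L c := by
  intro ℓ hℓ x hx y hy z hz hxy
  obtain ⟨i, hi⟩ := hc ℓ hℓ
  have fin_three : ∀ i a b d : Fin 3, a ≠ i → b ≠ i → d ≠ i → a ≠ b → d = a ∨ d = b := by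
    decide
  exact fin_three i _ _ _ (hi x hx) (hi y hy) (hi z hz) hxy

theorem LinesTwoColored.not_mem {L : Set (Set α)} {c : α → κ} (hc : LinesTwoColored L c)
    {m : Set α} (hm : m ∈ L) {x y p : α} (hx : x ∈ m) (hy : y ∈ m) (hxy : c x ≠ c y)
    (hpx : c p ≠ c x) (hpy : c p ≠ c y) : p ∉ m :=
  fun hp => (hc m hm x hx y hy p hp hxy).elim hpx hpy

namespace IsWeakProjectivePlane

variable {S : Set α} {L : Set (Set α)}

theorem finite_lines (hP : IsWeakProjectivePlane S L) (hS : S.Finite) : L.Finite :=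
  hS.finite_subsets.subset hP.subset

theorem finite_pencilMeeting (hP : IsWeakProjectivePlane S L) (hS : S.Finite) (p : α)
    (T : Set α) : (pencilMeeting L p T).Finite :=
  (hP.finite_lines hS).subset fun _ h => h.1

theorem exists_line (hP : IsWeakProjectivePlane S L) {p q : α} (hp : p ∈ S) (hq : q ∈ S)
    (hpq : p ≠ q) : ∃ ℓ ∈ L, p ∈ ℓ ∧ q ∈ ℓ :=
  (hP.existsUnique_line p hp q hq hpq).exists

theorem eq_of_mem_of_mem (hP : IsWeakProjectivePlane S L) {ℓ ℓ' : Set α} (hℓ : ℓ ∈ L)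
    (hℓ' : ℓ' ∈ L) {p q : α} (hpq : p ≠ q) (hpℓ : p ∈ ℓ) (hqℓ : q ∈ ℓ) (hpℓ' : p ∈ ℓ')
    (hqℓ' : q ∈ ℓ') : ℓ = ℓ' :=
  (hP.existsUnique_line p (hP.subset ℓ hℓ hpℓ) q (hP.subset ℓ hℓ hqℓ) hpq).unique
    ⟨hℓ, hpℓ, hqℓ⟩ ⟨hℓ', hpℓ', hqℓ'⟩

theorem ncard_pencilMeeting_of_subset_line (hP : IsWeakProjectivePlane S L) {m : Set α}
    (hm : m ∈ L) {p : α} (hp : p ∈ S) (hpm : p ∉ m) {T : Set α} (hT : T ⊆ m) :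
    (pencilMeeting L p T).ncard = T.ncard := by
  refine ncard_congr (fun ℓ hℓ => hℓ.2.2.some) (fun ℓ hℓ => hℓ.2.2.some_mem.2) ?_ ?_
  · rintro ℓ ℓ' ⟨hℓ, hpℓ, hℓT⟩ ⟨hℓ', hpℓ', hℓ'T⟩ h
    have hpt : p ≠ hℓT.some := fun h => hpm (h ▸ hT hℓT.some_mem.2)
    exact hP.eq_of_mem_of_mem hℓ hℓ' hpt hpℓ hℓT.some_mem.1 hpℓ' (h ▸ hℓ'T.some_mem.1)
  · intro t ht
    have hpt : p ≠ t := fun h => hpm (h ▸ hT ht)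
    obtain ⟨ℓ, hℓ, hpℓ, htℓ⟩ := hP.exists_line hp (hP.subset m hm (hT ht)) hpt
    have hℓT : (ℓ ∩ T).Nonempty := ⟨t, htℓ, ht⟩
    refine ⟨ℓ, ⟨hℓ, hpℓ, hℓT⟩, ?_⟩
    by_contra hne
    have hℓm := hP.eq_of_mem_of_mem hℓ hm hne hℓT.some_mem.1 htℓ (hT hℓT.some_mem.2) (hT ht)
    exact hpm (hℓm ▸ hpℓ)

theorem ncard_eq_finsum_ncard_inter (hP : IsWeakProjectivePlane S L) {p : α}
    {F : Set (Set α)} (hF : F.Finite) (hFL : ∀ ℓ ∈ F, ℓ ∈ L ∧ p ∈ ℓ) {Y : Set α}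
    (hY : Y.Finite) (hpY : p ∉ Y) (hYF : ∀ y ∈ Y, ∃ ℓ ∈ F, y ∈ ℓ) :
    Y.ncard = ∑ᶠ ℓ ∈ F, (ℓ ∩ Y).ncard := by
  have hYU : Y = ⋃ ℓ ∈ F, ℓ ∩ Y := by
    ext y
    simp only [mem_iUnion, mem_inter_iff, exists_prop]
    exact ⟨fun hy => (hYF y hy).imp fun ℓ h => ⟨h.1, h.2, hy⟩, fun ⟨_, _, _, hy⟩ => hy⟩
  calc Y.ncard = (⋃ ℓ ∈ F, ℓ ∩ Y).ncard := congrArg ncard hYU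
    _ = ∑ᶠ ℓ ∈ F, (ℓ ∩ Y).ncard := by
      refine hF.ncard_biUnion (fun ℓ _ => hY.subset inter_subset_right) ?_
      intro ℓ hℓ ℓ' hℓ' hne
      refine Set.disjoint_left.2 fun y hy hy' => hne ?_
      exact hP.eq_of_mem_of_mem (hFL ℓ hℓ).1 (hFL ℓ' hℓ').1 (ne_of_mem_of_not_mem hy.2 hpY).symm
        (hFL ℓ hℓ).2 hy.1 (hFL ℓ' hℓ').2 hy'.1

theorem two_le_ncard_pencilMeeting (hP : IsWeakProjectivePlane S L) (hS : S.Finite) {p : α}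
    (hp : p ∈ S) {T : Set α} (hTS : T ⊆ S) (hpT : p ∉ T) (hT : T.Nonempty)
    (hTL : ∀ ℓ ∈ L, ¬ T ⊆ ℓ) : 2 ≤ (pencilMeeting L p T).ncard := by
  obtain ⟨x, hx⟩ := hT
  obtain ⟨ℓ, hℓ, hpℓ, hxℓ⟩ := hP.exists_line hp (hTS hx) (ne_of_mem_of_not_mem hx hpT).symm
  obtain ⟨x', hx', hx'ℓ⟩ := not_subset.1 (hTL ℓ hℓ)
  obtain ⟨ℓ', hℓ', hpℓ', hx'ℓ'⟩ :=
    hP.exists_line hp (hTS hx') (ne_of_mem_of_not_mem hx' hpT).symm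
  exact (one_lt_ncard_iff (hP.finite_pencilMeeting hS p T)).2 ⟨ℓ, ℓ', ⟨hℓ, hpℓ, x, hxℓ, hx⟩,
    ⟨hℓ', hpℓ', x', hx'ℓ', hx'⟩, fun h => hx'ℓ (h ▸ hx'ℓ')⟩

variable {c : α → κ}

theorem ncard_inter_colorClass_eq (hP : IsWeakProjectivePlane S L) (hc : LinesTwoColored L c)
    {m : Set α} (hm : m ∈ L) {x y p : α} (hx : x ∈ m) (hy : y ∈ m) (hxy : c x ≠ c y)
    (hp : p ∈ S) (hpx : c p ≠ c x) (hpy : c p ≠ c y) :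
    (m ∩ colorClass S c (c x)).ncard = (pencilMeeting L p (colorClass S c (c x))).ncard := by
  have hpm := hc.not_mem hm hx hy hxy hpx hpy
  have hpencil : pencilMeeting L p (colorClass S c (c x)) =
      pencilMeeting L p (m ∩ colorClass S c (c x)) := by
    refine Subset.antisymm ?_ fun ℓ ⟨hℓ, hpℓ, hℓm⟩ => ⟨hℓ, hpℓ, hℓm.mono (by gcongr; simp)⟩
    rintro ℓ ⟨hℓ, hpℓ, z, hzℓ, -, hcz⟩
    have hℓm : ℓ ≠ m := by rintro rfl; exact hpm hpℓ
    obtain ⟨t, htℓ, htm⟩ := hP.inter_nonempty ℓ hℓ m hm hℓm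
    -- `t` has a colour of `m`, and one of `p` and `z`: the only common one is `c x`
    have hct : c t = c x := by
      have hpz : c p ≠ c z := hcz ▸ hpx
      rcases hc m hm x hx y hy t htm hxy with h | h
      · exact h
      · rcases hc ℓ hℓ p hpℓ z hzℓ t htℓ hpz with h' | h'
        · exact absurd (h.symm.trans h') hpy.symm
        · exact h'.trans hcz
    exact ⟨hℓ, hpℓ, t, htℓ, htm, hP.subset m hm htm, hct⟩
  rw [hpencil, hP.ncard_pencilMeeting_of_subset_line hm hp hpm inter_subset_left]

theorem ncard_colorClass_eq_mul (hP : IsWeakProjectivePlane S L) (hc : LinesTwoColored L c)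
    (hS : S.Finite) {i : κ} {y z : α} (hy : y ∈ S) (hz : z ∈ S) (hyi : c y ≠ i) (hzi : c z ≠ i)
    (hyz : c y ≠ c z) :
    (colorClass S c i).ncard =
      (pencilMeeting L y (colorClass S c i)).ncard *
        (pencilMeeting L z (colorClass S c i)).ncard := by
  have hcover : ∀ t ∈ colorClass S c i, ∃ ℓ ∈ pencilMeeting L y (colorClass S c i), t ∈ ℓ := by
    rintro t ⟨htS, rfl⟩
    obtain ⟨ℓ, hℓ, hyℓ, htℓ⟩ := hP.exists_line hy htS fun h => hyi (h ▸ rfl)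
    exact ⟨ℓ, ⟨hℓ, hyℓ, t, htℓ, htS, rfl⟩, htℓ⟩
  have hpiece : ∀ ℓ ∈ pencilMeeting L y (colorClass S c i),
      (ℓ ∩ colorClass S c i).ncard = (pencilMeeting L z (colorClass S c i)).ncard := by
    rintro ℓ ⟨hℓ, hyℓ, t, htℓ, -, rfl⟩
    exact hP.ncard_inter_colorClass_eq hc hℓ htℓ hyℓ (Ne.symm hyi) hz hzi hyz.symm
  rw [hP.ncard_eq_finsum_ncard_inter (hP.finite_pencilMeeting hS y _)
    (fun _ h => ⟨h.1, h.2.1⟩) (hS.subset colorClass_subset) (fun h => hyi h.2) hcover,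
    finsum_mem_congr rfl hpiece, finsum_mem_const_eq_ncard_mul]

theorem ncard_inter_colorClass_diff_singleton (hP : IsWeakProjectivePlane S L)
    (hc : LinesTwoColored L c) {x y z : α} (hx : x ∈ S) (hz : z ∈ S) (hxy : c x ≠ c y)
    (hxz : c x ≠ c z) (hyz : c y ≠ c z) {ℓ : Set α}
    (hℓ : ℓ ∈ pencilMeeting L x (colorClass S c (c y))) :
    (ℓ ∩ (colorClass S c (c x) \ {x})).ncard =
      (pencilMeeting L z (colorClass S c (c x))).ncard - 1 := by
  obtain ⟨hℓ, hxℓ, u, huℓ, -, hcu⟩ := hℓ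
  rw [← inter_sdiff_assoc, ncard_sdiff_singleton_of_mem (mem_inter hxℓ (mem_colorClass_self hx)),
    hP.ncard_inter_colorClass_eq hc hℓ hxℓ huℓ (hcu ▸ hxy) hz hxz.symm (hcu ▸ hyz.symm)]

theorem ncard_colorClass_sub_one_eq (hP : IsWeakProjectivePlane S L) (hc : LinesTwoColored L c)
    (hS : S.Finite) {x y z : α} (hx : x ∈ S) (hy : y ∈ S) (hz : z ∈ S) (hxy : c x ≠ c y)
    (hxz : c x ≠ c z) (hyz : c y ≠ c z) :
    (colorClass S c (c x)).ncard - 1 =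
      (pencilMeeting L x (colorClass S c (c y))).ncard *
          ((pencilMeeting L z (colorClass S c (c x))).ncard - 1) +
        (pencilMeeting L x (colorClass S c (c z))).ncard *
          ((pencilMeeting L y (colorClass S c (c x))).ncard - 1) := by
  have hFy := hP.finite_pencilMeeting hS x (colorClass S c (c y))
  have hFz := hP.finite_pencilMeeting hS x (colorClass S c (c z))
  have hdisj : Disjoint (pencilMeeting L x (colorClass S c (c y)))
      (pencilMeeting L x (colorClass S c (c z))) := by
    refine Set.disjoint_left.2 ?_
    rintro ℓ ⟨hℓ, hxℓ, u, huℓ, -, hcu⟩ ⟨-, -, w, hwℓ, -, hcw⟩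
    exact (hc ℓ hℓ u huℓ w hwℓ x hxℓ (hcu ▸ hcw ▸ hyz)).elim (hcu ▸ hxy) (hcw ▸ hxz)
  have hcover : ∀ t ∈ colorClass S c (c x) \ {x},
      ∃ ℓ ∈ pencilMeeting L x (colorClass S c (c y)) ∪ pencilMeeting L x (colorClass S c (c z)),
        t ∈ ℓ := by
    rintro t ⟨⟨htS, -⟩, htx⟩
    obtain ⟨ℓ, hℓ, hxℓ, htℓ⟩ := hP.exists_line hx htS (Ne.symm htx)
    obtain ⟨m, hm, hym, hzm⟩ := hP.exists_line hy hz fun h => hyz (h ▸ rfl)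
    have hxm := hc.not_mem hm hym hzm hyz hxy hxz
    obtain ⟨s, hsℓ, hsm⟩ := hP.inter_nonempty ℓ hℓ m hm fun h => hxm (h ▸ hxℓ)
    have hsS := hP.subset m hm hsm
    refine ⟨ℓ, ?_, htℓ⟩
    rcases hc m hm y hym z hzm s hsm hyz with h | h
    · exact Or.inl ⟨hℓ, hxℓ, s, hsℓ, hsS, h⟩
    · exact Or.inr ⟨hℓ, hxℓ, s, hsℓ, hsS, h⟩
  rw [← ncard_sdiff_singleton_of_mem (mem_colorClass_self hx),
    hP.ncard_eq_finsum_ncard_inter (hFy.union hFz)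
      (fun ℓ h => h.elim (fun h => ⟨h.1, h.2.1⟩) fun h => ⟨h.1, h.2.1⟩)
      (hS.subset fun _ h => h.1.1) (fun h => h.2 rfl) hcover,
    finsum_mem_union hdisj hFy hFz,
    finsum_mem_congr rfl fun ℓ hℓ =>
      hP.ncard_inter_colorClass_diff_singleton hc hx hz hxy hxz hyz hℓ,
    finsum_mem_congr rfl fun ℓ hℓ =>
      hP.ncard_inter_colorClass_diff_singleton hc hx hy hxz hxy hyz.symm hℓ,
    finsum_mem_const_eq_ncard_mul, finsum_mem_const_eq_ncard_mul]

theorem ncard_pencilMeeting_colorClass_lt (hP : IsWeakProjectivePlane S L)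
    (hc : LinesTwoColored L c) (hS : S.Finite) (hX : ∀ i, ∀ ℓ ∈ L, ¬ colorClass S c i ⊆ ℓ)
    {x y z : α} (hx : x ∈ S) (hy : y ∈ S) (hz : z ∈ S) (hxy : c x ≠ c y) (hxz : c x ≠ c z)
    (hyz : c y ≠ c z) :
    (pencilMeeting L x (colorClass S c (c y))).ncard <
      (pencilMeeting L y (colorClass S c (c x))).ncard := by
  have two_le : ∀ {p q : α}, p ∈ S → q ∈ S → c p ≠ c q →
      2 ≤ (pencilMeeting L p (colorClass S c (c q))).ncard := fun hp hq hpq =>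
    hP.two_le_ncard_pencilMeeting hS hp colorClass_subset (fun h => hpq h.2)
      ⟨_, hq, rfl⟩ (hX _)
  exact Nat.lt_of_eq_mul_of_sub_one_eq (one_le_two.trans (two_le hz hx hxz.symm))
    (two_le hy hx hxy.symm) (two_le hx hz hxz)
    (hP.ncard_colorClass_eq_mul hc hS hy hz hxy.symm hxz.symm hyz)
    (hP.ncard_colorClass_sub_one_eq hc hS hx hy hz hxy hxz hyz)

end IsWeakProjectivePlane

/-- In any 3-coloring of the points of a finite projective plane in which every line
misses some color, some color class is contained in a single line. -/
theorem statement_14 (S : Set α) (L : Set (Set α)) (hfin : S.Finite)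
    (hLS : ∀ ℓ ∈ L, ℓ ⊆ S)
    (hP1 : ∀ p ∈ S, ∀ p' ∈ S, p ≠ p' → ∃! ℓ, ℓ ∈ L ∧ p ∈ ℓ ∧ p' ∈ ℓ)
    (hP2 : ∀ ℓ ∈ L, ∀ ℓ' ∈ L, ℓ ≠ ℓ' → ∃! p, p ∈ ℓ ∩ ℓ')
    (hP3 : ∃ p₁ p₂ p₃ p₄ : α, ({p₁, p₂, p₃, p₄} : Set α) ⊆ S ∧
      ({p₁, p₂, p₃, p₄} : Set α).encard = 4 ∧
      ∀ ℓ ∈ L, (({p₁, p₂, p₃, p₄} : Set α) ∩ ℓ).encard ≤ 2)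
    (c : α → Fin 3)
    (hc : ∀ ℓ ∈ L, ∃ i : Fin 3, ∀ p ∈ ℓ, c p ≠ i) :
    ∃ i : Fin 3, ∃ ℓ ∈ L, {p ∈ S | c p = i} ⊆ ℓ := by
  by_contra! hX
  have hP : IsWeakProjectivePlane S L :=
    ⟨hLS, hP1, fun ℓ hℓ ℓ' hℓ' hne => (hP2 ℓ hℓ ℓ' hℓ' hne).exists⟩
  obtain ⟨p₁, p₂, p₃, p₄, hsub, hcard, -⟩ := hP3
  obtain ⟨a, b, ha, hb, hab⟩ := one_lt_encard_iff.1 (by rw [hcard]; norm_num)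
  obtain ⟨ℓ, hℓ, -⟩ := hP.exists_line (hsub ha) (hsub hb) hab
  have hnonempty : ∀ i, ∃ p ∈ S, c p = i := fun i => by
    obtain ⟨p, ⟨hp, hcp⟩, -⟩ := nonempty_of_not_subset (hX i ℓ hℓ)
    exact ⟨p, hp, hcp⟩
  obtain ⟨x, hx, hcx⟩ := hnonempty 0
  obtain ⟨y, hy, hcy⟩ := hnonempty 1
  obtain ⟨z, hz, hcz⟩ := hnonempty 2
  have hxy : c x ≠ c y := by rw [hcx, hcy]; decide
  have hxz : c x ≠ c z := by rw [hcx, hcz]; decide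
  have hyz : c y ≠ c z := by rw [hcy, hcz]; decide
  have hc' := linesTwoColored_of_forall_exists_ne hc
  exact (hP.ncard_pencilMeeting_colorClass_lt hc' hfin hX hx hy hz hxy hxz hyz).asymm
    (hP.ncard_pencilMeeting_colorClass_lt hc' hfin hX hy hx hz hxy.symm hyz hxz)
end

section
/- Let M = (S, I) be the paving matroid of rank 3 defined by the lines of a projective plane of order q, i.e., S is the point set and the bases of M are the 3-element sets of non-collinear points. If N = (S, J) is a partition matroid with N ⪯ M, then χ(N) ≥ (|S|−1)/2 if q is odd, and χ(N) ≥ (|S|+1)/2 if q is even, where |S| = q²+q+1. -/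
open Set

variable {α : Type*}

/-!
No line meets three classes of `N`: three such points would form an `N`-independent, hence
`M`-independent, collinear triple. With at most two nonempty classes, one of them has at least
`(|S| + 1) / 2` points. Otherwise any three nonempty classes `A`, `B`, `C` cover the plane (the
line through a point of a fourth class and a point of `C` meets the line joining `A` and `B`), a
line meeting two of them lies in their union, and projecting from a point of `B` shows that all
lines meeting both `A` and `C` meet `A` in the same number of points. Counting along pencils
through points of the other classes gives `|A| = a v`, `|B| = b u`, `|C| = v' u'`, where
`a + b = u + u' = v + v' = q + 1` are the splittings of the three lines joining the classes.
The equation `|A| + |B| + |C| = q² + q + 1` then forces one of the classes to have `q x` points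
with `2 x ≥ q + 1`.
-/

theorem Set.ncard_inter_add_ncard_inter_of_subset_union {ℓ X Y : Set α} (hℓ : ℓ.Finite)
    (hXY : Disjoint X Y) (h : ℓ ⊆ X ∪ Y) : (ℓ ∩ X).ncard + (ℓ ∩ Y).ncard = ℓ.ncard := by
  rw [← ncard_union_eq (hXY.mono inter_subset_right inter_subset_right) (hℓ.inter_of_left X)
    (hℓ.inter_of_left Y), ← inter_union_distrib_left, inter_eq_left.2 h]

theorem exists_eq_mul_of_sum_mul_eq {q a b u u' v v' : ℕ} (ha : 0 < a) (hb : 0 < b)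
    (hu : 0 < u) (hu' : 0 < u') (hv : 0 < v) (hv' : 0 < v') (hab : a + b = q + 1)
    (huu' : u + u' = q + 1) (hvv' : v + v' = q + 1)
    (hsum : a * v + b * u + v' * u' = q ^ 2 + q + 1) :
    ∃ x, q + 1 ≤ 2 * x ∧ (a * v = q * x ∨ b * u = q * x ∨ v' * u' = q * x) := by
  -- Since `1 ≤ u, v ≤ q`, the factors on the left of `key` are bounded by those on the right
  -- (up to a common sign), so either `a ∈ {1, q}` or `u = v ∈ {1, q}`.
  have key : ((q : ℤ) + 1 - a - u) * (a - v) = (a - 1) * (q - a) := by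
    have hsumZ : (a * v + b * u + v' * u' : ℤ) = q ^ 2 + q + 1 := by exact_mod_cast hsum
    rw [show (b : ℤ) = q + 1 - a by omega, show (u' : ℤ) = q + 1 - u by omega,
      show (v' : ℤ) = q + 1 - v by omega] at hsumZ
    linear_combination hsumZ
  obtain ha1 | haq | ⟨ha2, haq⟩ : a = 1 ∨ a = q ∨ (2 ≤ a ∧ a < q) := by omega
  · have hbq : b = q := by omega
    obtain huq | hv1 : u = q ∨ v = 1 := by
      rcases mul_eq_zero.1 (key.trans (by rw [ha1]; ring)) with h | h
      · left; omega
      · right; omega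
    · exact ⟨q, by omega, .inr <| .inl <| by rw [hbq, huq]⟩
    · rcases le_total (q + 1) (2 * u) with h | h
      · exact ⟨u, h, .inr <| .inl <| by rw [hbq]⟩
      · exact ⟨u', by omega, .inr <| .inr <| by rw [show v' = q by omega, mul_comm]⟩
  · obtain hu1 | hvq : u = 1 ∨ v = q := by
      rcases mul_eq_zero.1 (key.trans (by rw [haq]; ring)) with h | h
      · left; omega
      · right; omega
    · rcases le_total (q + 1) (2 * v) with h | h
      · exact ⟨v, h, .inl <| by rw [haq]⟩
      · exact ⟨v', by omega, .inr <| .inr <| by rw [show u' = q by omega, mul_comm]⟩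
    · exact ⟨q, by omega, .inl <| by rw [haq, hvq]⟩
  · have hpos : (0 : ℤ) < (a - 1) * (q - a) := mul_pos (by omega) (by omega)
    rcases pos_and_pos_or_neg_and_neg_of_mul_pos (key ▸ hpos) with ⟨hs, ht⟩ | ⟨hs, ht⟩
    · obtain ⟨hs', ht'⟩ := (mul_eq_mul_iff_eq_and_eq_of_pos (a := (q : ℤ) + 1 - a - u)
        (b := q - a) (c := a - v) (d := a - 1) (by omega) (by omega) hs (by omega)).1
        (key.trans (mul_comm _ _))
      exact ⟨q, by omega, .inr <| .inr <| by rw [show v' = q by omega, show u' = q by omega]⟩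
    · obtain ⟨hs', ht'⟩ := (mul_eq_mul_iff_eq_and_eq_of_pos (a := (a : ℤ) + u - q - 1)
        (b := a - 1) (c := v - a) (d := q - a) (by omega) (by omega) (by omega) (by omega)).1
        (by linear_combination key)
      rcases le_total (q + 1) (2 * a) with h | h
      · exact ⟨a, h, .inl <| by rw [show v = q by omega, mul_comm]⟩
      · exact ⟨b, by omega, .inr <| .inl <| by rw [show u = q by omega, mul_comm]⟩

def HalfPlaneBound (q n : ℕ) : Prop :=
  q ^ 2 + q ≤ 2 * n ∧ (Even q → q ^ 2 + q + 2 ≤ 2 * n)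

theorem halfPlaneBound_mul {q x : ℕ} (hq : 0 < q) (hx : q + 1 ≤ 2 * x) :
    HalfPlaneBound q (q * x) := by
  refine ⟨by nlinarith, fun ⟨k, hk⟩ => ?_⟩
  have hq2 : 2 ≤ q := by omega
  nlinarith [Nat.mul_le_mul_left q (show q + 2 ≤ 2 * x by omega)]

theorem halfPlaneBound_of_le_two_mul {q n : ℕ} (h : q ^ 2 + q + 1 ≤ 2 * n) :
    HalfPlaneBound q n := by
  obtain ⟨k, hk⟩ := Nat.even_mul_succ_self q
  refine ⟨by omega, fun _ => ?_⟩
  have : q ^ 2 + q = q * (q + 1) := by ring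
  omega

structure IsProjectiveIncidence (S : Set α) (L : Set (Set α)) : Prop where
  subset_of_mem : ∀ ℓ ∈ L, ℓ ⊆ S
  existsUnique_line : ∀ p ∈ S, ∀ p' ∈ S, p ≠ p' → ∃! ℓ, ℓ ∈ L ∧ p ∈ ℓ ∧ p' ∈ ℓ
  existsUnique_inter : ∀ ℓ ∈ L, ∀ ℓ' ∈ L, ℓ ≠ ℓ' → ∃! p, p ∈ ℓ ∩ ℓ'

namespace IsProjectiveIncidence

variable {S : Set α} {L : Set (Set α)}

theorem exists_line (hPL : IsProjectiveIncidence S L) {p p' : α} (hp : p ∈ S) (hp' : p' ∈ S)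
    (hne : p ≠ p') : ∃ ℓ ∈ L, p ∈ ℓ ∧ p' ∈ ℓ :=
  (hPL.existsUnique_line p hp p' hp' hne).exists

theorem eq_of_mem_of_mem (hPL : IsProjectiveIncidence S L) {ℓ ℓ' : Set α} {p p' : α}
    (hℓ : ℓ ∈ L) (hℓ' : ℓ' ∈ L) (hne : p ≠ p') (hpℓ : p ∈ ℓ) (hp'ℓ : p' ∈ ℓ) (hpℓ' : p ∈ ℓ')
    (hp'ℓ' : p' ∈ ℓ') : ℓ = ℓ' :=
  (hPL.existsUnique_line p (hPL.subset_of_mem ℓ hℓ hpℓ) p' (hPL.subset_of_mem ℓ hℓ hp'ℓ)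
    hne).unique ⟨hℓ, hpℓ, hp'ℓ⟩ ⟨hℓ', hpℓ', hp'ℓ'⟩

theorem inter_nonempty (hPL : IsProjectiveIncidence S L) {ℓ ℓ' : Set α} (hℓ : ℓ ∈ L)
    (hℓ' : ℓ' ∈ L) (hne : ℓ ≠ ℓ') : (ℓ ∩ ℓ').Nonempty :=
  (hPL.existsUnique_inter ℓ hℓ ℓ' hℓ' hne).exists

/-- Projecting `ℓ₁` onto `ℓ₂` from the point `z` injects `ℓ₁ ∩ D` into `ℓ₂ ∩ D`. -/
theorem ncard_inter_le_of_perspectivity (hPL : IsProjectiveIncidence S L) (hS : S.Finite)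
    {ℓ₁ ℓ₂ D : Set α} {z : α} (h₁ : ℓ₁ ∈ L) (h₂ : ℓ₂ ∈ L) (hz : z ∈ S) (hz₁ : z ∉ ℓ₁)
    (hz₂ : z ∉ ℓ₂) (hD : ∀ ℓ ∈ L, z ∈ ℓ → (ℓ ∩ ℓ₁ ∩ D).Nonempty → ℓ ∩ ℓ₂ ⊆ D) :
    (ℓ₁ ∩ D).ncard ≤ (ℓ₂ ∩ D).ncard := by
  have hproj : ∀ w ∈ ℓ₁ ∩ D, ∃ p ∈ ℓ₂ ∩ D, ∃ ℓ ∈ L, z ∈ ℓ ∧ w ∈ ℓ ∧ p ∈ ℓ := by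
    intro w hw
    obtain ⟨ℓ, hℓ, hzℓ, hwℓ⟩ :=
      hPL.exists_line hz (hPL.subset_of_mem ℓ₁ h₁ hw.1) (ne_of_mem_of_not_mem hw.1 hz₁).symm
    obtain ⟨p, hpℓ, hp₂⟩ := hPL.inter_nonempty hℓ h₂ (ne_of_mem_of_not_mem' hzℓ hz₂)
    exact ⟨p, ⟨hp₂, hD ℓ hℓ hzℓ ⟨w, ⟨hwℓ, hw.1⟩, hw.2⟩ ⟨hpℓ, hp₂⟩⟩, ℓ, hℓ, hzℓ, hwℓ, hpℓ⟩
  choose! f hf hfℓ using hproj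
  refine ncard_le_ncard_of_injOn f hf (fun w hw w' hw' hww' => ?_)
    ((hS.subset (hPL.subset_of_mem ℓ₂ h₂)).inter_of_left D)
  obtain ⟨ℓ, hℓ, hzℓ, hwℓ, hfℓw⟩ := hfℓ w hw
  obtain ⟨ℓ', hℓ', hzℓ', hwℓ', hfℓw'⟩ := hfℓ w' hw'
  have hzf : z ≠ f w := (ne_of_mem_of_not_mem (hf w hw).1 hz₂).symm
  have hll' : ℓ = ℓ' := hPL.eq_of_mem_of_mem hℓ hℓ' hzf hzℓ hfℓw hzℓ' (hww' ▸ hfℓw')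
  by_contra hne
  exact hz₁ (hPL.eq_of_mem_of_mem hℓ h₁ hne hwℓ (hll' ▸ hwℓ') hw.1 hw'.1 ▸ hzℓ)

theorem ncard_eq_mul_of_pencil (hPL : IsProjectiveIncidence S L) (hS : S.Finite)
    {m D : Set α} {z : α} {v : ℕ} (hm : m ∈ L) (hz : z ∈ S) (hzm : z ∉ m) (hDS : D ⊆ S)
    (hzD : z ∉ D)
    (hD : ∀ ℓ ∈ L, z ∈ ℓ → (ℓ ∩ D).Nonempty → ℓ ∩ m ⊆ D ∧ (ℓ ∩ D).ncard = v) :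
    D.ncard = (m ∩ D).ncard * v := by
  set F : α → Set α := fun w => {y ∈ D | ∃ ℓ ∈ L, z ∈ ℓ ∧ w ∈ ℓ ∧ y ∈ ℓ}
  have hcover : D = ⋃ w ∈ m ∩ D, F w := by
    refine (Subset.antisymm (fun y hy => ?_) (iUnion₂_subset fun w _ => sep_subset _ _))
    obtain ⟨ℓ, hℓ, hzℓ, hyℓ⟩ :=
      hPL.exists_line hz (hDS hy) (ne_of_mem_of_not_mem hy hzD).symm
    obtain ⟨p, hpℓ, hpm⟩ := hPL.inter_nonempty hℓ hm (ne_of_mem_of_not_mem' hzℓ hzm)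
    have hpD : p ∈ D := (hD ℓ hℓ hzℓ ⟨y, hyℓ, hy⟩).1 ⟨hpℓ, hpm⟩
    exact mem_biUnion ⟨hpm, hpD⟩ ⟨hy, ℓ, hℓ, hzℓ, hpℓ, hyℓ⟩
  have hdisj : (m ∩ D).PairwiseDisjoint F := by
    intro w hw w' hw' hne
    refine disjoint_left.2 fun y ⟨hy, ℓ, hℓ, hzℓ, hwℓ, hyℓ⟩ ⟨_, ℓ', hℓ', hzℓ', hwℓ', hyℓ'⟩ => ?_
    have hll' : ℓ = ℓ' :=
      hPL.eq_of_mem_of_mem hℓ hℓ' (ne_of_mem_of_not_mem hy hzD).symm hzℓ hyℓ hzℓ' hyℓ'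
    exact hzm (hPL.eq_of_mem_of_mem hℓ hm hne hwℓ (hll' ▸ hwℓ') hw.1 hw'.1 ▸ hzℓ)
  have hsize : ∀ w ∈ m ∩ D, (F w).ncard = v := by
    intro w hw
    obtain ⟨ℓ, hℓ, hzℓ, hwℓ⟩ :=
      hPL.exists_line hz (hDS hw.2) (ne_of_mem_of_not_mem hw.2 hzD).symm
    have hFw : F w = ℓ ∩ D := by
      ext y
      refine ⟨fun ⟨hy, ℓ', hℓ', hzℓ', hwℓ', hyℓ'⟩ => ⟨?_, hy⟩, fun ⟨hyℓ, hy⟩ =>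
        ⟨hy, ℓ, hℓ, hzℓ, hwℓ, hyℓ⟩⟩
      rwa [hPL.eq_of_mem_of_mem hℓ hℓ' (ne_of_mem_of_not_mem hw.2 hzD).symm hzℓ hwℓ hzℓ' hwℓ']
    rw [hFw]
    exact (hD ℓ hℓ hzℓ ⟨w, hwℓ, hw.2⟩).2
  have hDfin : D.Finite := hS.subset hDS
  calc D.ncard = (⋃ w ∈ m ∩ D, F w).ncard := by rw [← hcover]
    _ = ∑ᶠ w ∈ m ∩ D, (F w).ncard :=
      (hDfin.inter_of_right m).ncard_biUnion (fun w _ => hDfin.subset (sep_subset _ _)) hdisj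
    _ = ∑ᶠ _ ∈ m ∩ D, v := finsum_mem_congr rfl hsize
    _ = (m ∩ D).ncard * v := by rw [← finsum_one, finsum_mem_mul, one_mul]

end IsProjectiveIncidence

structure IsRainbowFreeTripartition (L : Set (Set α)) (S A B C : Set α) : Prop where
  union_eq : A ∪ B ∪ C = S
  disjoint_ab : Disjoint A B
  disjoint_ac : Disjoint A C
  disjoint_bc : Disjoint B C
  not_rainbow : ∀ ℓ ∈ L, (ℓ ∩ A).Nonempty → (ℓ ∩ B).Nonempty → (ℓ ∩ C).Nonempty → False

namespace IsRainbowFreeTripartition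

variable {S A B C : Set α} {L : Set (Set α)}

theorem swap (h : IsRainbowFreeTripartition L S A B C) :
    IsRainbowFreeTripartition L S B A C where
  union_eq := by rw [← h.union_eq]; ac_rfl
  disjoint_ab := h.disjoint_ab.symm
  disjoint_ac := h.disjoint_bc
  disjoint_bc := h.disjoint_ac
  not_rainbow ℓ hℓ hB hA hC := h.not_rainbow ℓ hℓ hA hB hC

theorem rotate (h : IsRainbowFreeTripartition L S A B C) :
    IsRainbowFreeTripartition L S B C A where
  union_eq := by rw [← h.union_eq]; ac_rfl
  disjoint_ab := h.disjoint_bc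
  disjoint_ac := h.disjoint_ab.symm
  disjoint_bc := h.disjoint_ac.symm
  not_rainbow ℓ hℓ hB hC hA := h.not_rainbow ℓ hℓ hA hB hC

theorem left_subset (h : IsRainbowFreeTripartition L S A B C) : A ⊆ S :=
  h.union_eq ▸ subset_union_left.trans subset_union_left

theorem middle_subset (h : IsRainbowFreeTripartition L S A B C) : B ⊆ S :=
  h.union_eq ▸ subset_union_right.trans subset_union_left

theorem right_subset (h : IsRainbowFreeTripartition L S A B C) : C ⊆ S :=
  h.union_eq ▸ subset_union_right

theorem ncard_add_ncard_add_ncard (h : IsRainbowFreeTripartition L S A B C) (hS : S.Finite) :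
    A.ncard + B.ncard + C.ncard = S.ncard := by
  have hA := hS.subset h.left_subset
  have hB := hS.subset h.middle_subset
  rw [← h.union_eq, ncard_union_eq (disjoint_union_left.2 ⟨h.disjoint_ac, h.disjoint_bc⟩)
    (hA.union hB) (hS.subset h.right_subset), ncard_union_eq h.disjoint_ab hA hB]

theorem subset_union (h : IsRainbowFreeTripartition L S A B C) (hLS : ∀ ℓ ∈ L, ℓ ⊆ S)
    {ℓ : Set α} (hℓ : ℓ ∈ L) (hA : (ℓ ∩ A).Nonempty) (hB : (ℓ ∩ B).Nonempty) :
    ℓ ⊆ A ∪ B := by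
  intro t ht
  rw [← h.union_eq] at hLS
  exact (hLS ℓ hℓ ht).resolve_right fun htC => h.not_rainbow ℓ hℓ hA hB ⟨t, ht, htC⟩

theorem union_inter_union_eq (h : IsRainbowFreeTripartition L S A B C) :
    (A ∪ B) ∩ (A ∪ C) = A := by
  rw [← union_inter_distrib_left, h.disjoint_bc.inter_eq, union_empty]

theorem ncard_inter_le (h : IsRainbowFreeTripartition L S A B C)
    (hPL : IsProjectiveIncidence S L) (hS : S.Finite) {z : α} (hz : z ∈ B) {ℓ₁ ℓ₂ : Set α}
    (h₁ : ℓ₁ ∈ L) (h₂ : ℓ₂ ∈ L) (h₁A : (ℓ₁ ∩ A).Nonempty) (h₁C : (ℓ₁ ∩ C).Nonempty)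
    (h₂A : (ℓ₂ ∩ A).Nonempty) (h₂C : (ℓ₂ ∩ C).Nonempty) :
    (ℓ₁ ∩ A).ncard ≤ (ℓ₂ ∩ A).ncard := by
  have h₁AC := h.swap.rotate.subset_union hPL.subset_of_mem h₁ h₁A h₁C
  have h₂AC := h.swap.rotate.subset_union hPL.subset_of_mem h₂ h₂A h₂C
  have hzAC : z ∉ A ∪ C := fun hz' =>
    hz'.elim (h.disjoint_ab.notMem_of_mem_right hz) (h.disjoint_bc.notMem_of_mem_left hz)
  refine hPL.ncard_inter_le_of_perspectivity hS h₁ h₂ (h.middle_subset hz)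
    (fun hz₁ => hzAC (h₁AC hz₁)) (fun hz₂ => hzAC (h₂AC hz₂))
    fun ℓ hℓ hzℓ ⟨w, ⟨hwℓ, _⟩, hwA⟩ p ⟨hpℓ, hp₂⟩ => ?_
  have hℓAB : ℓ ⊆ A ∪ B := union_comm B A ▸
    h.swap.subset_union hPL.subset_of_mem hℓ ⟨z, hzℓ, hz⟩ ⟨w, hwℓ, hwA⟩
  exact h.union_inter_union_eq ▸ ⟨hℓAB hpℓ, h₂AC hp₂⟩

theorem ncard_eq_mul (h : IsRainbowFreeTripartition L S A B C)
    (hPL : IsProjectiveIncidence S L) (hS : S.Finite) {x y z : α} (hy : y ∈ A) (hz : z ∈ B)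
    (hx : x ∈ C) {m n : Set α} (hm : m ∈ L) (hym : y ∈ m) (hzm : z ∈ m) (hn : n ∈ L)
    (hyn : y ∈ n) (hxn : x ∈ n) :
    A.ncard = (m ∩ A).ncard * (n ∩ A).ncard := by
  have hmAB := h.subset_union hPL.subset_of_mem hm ⟨y, hym, hy⟩ ⟨z, hzm, hz⟩
  have hxAB : x ∉ A ∪ B := fun hx' =>
    hx'.elim (h.disjoint_ac.notMem_of_mem_right hx) (h.disjoint_bc.notMem_of_mem_right hx)
  refine hPL.ncard_eq_mul_of_pencil hS hm (h.right_subset hx) (fun hxm => hxAB (hmAB hxm))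
    h.left_subset (fun hxA => hxAB (Or.inl hxA))
    fun ℓ hℓ hxℓ hℓA => ⟨fun p ⟨hpℓ, hpm⟩ => ?_, ?_⟩
  · have hℓAC := h.swap.rotate.subset_union hPL.subset_of_mem hℓ hℓA ⟨x, hxℓ, hx⟩
    exact h.union_inter_union_eq ▸ ⟨hmAB hpm, hℓAC hpℓ⟩
  · exact le_antisymm
      (h.ncard_inter_le hPL hS hz hℓ hn hℓA ⟨x, hxℓ, hx⟩ ⟨y, hyn, hy⟩ ⟨x, hxn, hx⟩)
      (h.ncard_inter_le hPL hS hz hn hℓ ⟨y, hyn, hy⟩ ⟨x, hxn, hx⟩ hℓA ⟨x, hxℓ, hx⟩)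

theorem halfPlaneBound (h : IsRainbowFreeTripartition L S A B C)
    (hPL : IsProjectiveIncidence S L) (hS : S.Finite) {q : ℕ}
    (hline : ∀ ℓ ∈ L, ℓ.ncard = q + 1) (hcard : S.ncard = q ^ 2 + q + 1) {x y z : α}
    (hy : y ∈ A) (hz : z ∈ B) (hx : x ∈ C) :
    HalfPlaneBound q A.ncard ∨ HalfPlaneBound q B.ncard ∨ HalfPlaneBound q C.ncard := by
  obtain ⟨m, hm, hym, hzm⟩ :=
    hPL.exists_line (h.left_subset hy) (h.middle_subset hz) (h.disjoint_ab.ne_of_mem hy hz)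
  obtain ⟨n, hn, hyn, hxn⟩ :=
    hPL.exists_line (h.left_subset hy) (h.right_subset hx) (h.disjoint_ac.ne_of_mem hy hx)
  obtain ⟨r, hr, hzr, hxr⟩ :=
    hPL.exists_line (h.middle_subset hz) (h.right_subset hx) (h.disjoint_bc.ne_of_mem hz hx)
  have hA := h.ncard_eq_mul hPL hS hy hz hx hm hym hzm hn hyn hxn
  have hB := h.swap.ncard_eq_mul hPL hS hz hy hx hm hzm hym hr hzr hxr
  have hC := h.rotate.rotate.ncard_eq_mul hPL hS hx hy hz hn hxn hyn hr hxr hzr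
  have hsplit {ℓ X Y : Set α} (hℓ : ℓ ∈ L) (hXY : Disjoint X Y) (hXYℓ : ℓ ⊆ X ∪ Y) :
      (ℓ ∩ X).ncard + (ℓ ∩ Y).ncard = q + 1 :=
    hline ℓ hℓ ▸ ncard_inter_add_ncard_inter_of_subset_union
      (hS.subset (hPL.subset_of_mem ℓ hℓ)) hXY hXYℓ
  have hpos {ℓ X : Set α} (hℓ : ℓ ∈ L) {p : α} (hpℓ : p ∈ ℓ) (hpX : p ∈ X) :
      0 < (ℓ ∩ X).ncard :=
    (ncard_pos ((hS.subset (hPL.subset_of_mem ℓ hℓ)).inter_of_left X)).2 ⟨p, hpℓ, hpX⟩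
  have hm' := hsplit hm h.disjoint_ab
    (h.subset_union hPL.subset_of_mem hm ⟨y, hym, hy⟩ ⟨z, hzm, hz⟩)
  have hr' := hsplit hr h.disjoint_bc
    (h.rotate.subset_union hPL.subset_of_mem hr ⟨z, hzr, hz⟩ ⟨x, hxr, hx⟩)
  have hn' := hsplit hn h.disjoint_ac
    (h.swap.rotate.subset_union hPL.subset_of_mem hn ⟨y, hyn, hy⟩ ⟨x, hxn, hx⟩)
  obtain ⟨w, hw, hw'⟩ := exists_eq_mul_of_sum_mul_eq (hpos hm hym hy) (hpos hm hzm hz)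
    (hpos hr hzr hz) (hpos hr hxr hx) (hpos hn hyn hy) (hpos hn hxn hx) hm' hr' hn'
    (hA ▸ hB ▸ hC ▸ hcard ▸ h.ncard_add_ncard_add_ncard hS)
  have hq : 0 < q := by have := hpos hm hym hy; have := hpos hm hzm hz; omega
  rw [hA, hB, hC]
  have hbound := halfPlaneBound_mul hq hw
  rcases hw' with h | h | h <;> rw [h] <;> simp only [hbound, true_or, or_true]

end IsRainbowFreeTripartition

def IsRainbowFree (L P : Set (Set α)) : Prop :=
  ∀ ℓ ∈ L, ∀ A ∈ P, ∀ B ∈ P, ∀ C ∈ P, A ≠ B → A ≠ C → B ≠ C →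
    (ℓ ∩ A).Nonempty → (ℓ ∩ B).Nonempty → (ℓ ∩ C).Nonempty → False

theorem Matroid.IsPartitionMatroid.isRainbowFree {M N : Matroid α} {L P : Set (Set α)}
    (hN : N.IsPartitionMatroid P) (hred : N.Reduction M)
    (hL : ∀ ℓ ∈ L, ∀ X ⊆ ℓ, M.Indep X → X.encard ≤ 2) : IsRainbowFree L P := by
  obtain ⟨hPE, hdisj, hindep⟩ := hN
  have hsame : ∀ D ∈ P, ∀ D' ∈ P, ∀ a, a ∈ D → a ∈ D' → D = D' :=
    fun D hD D' hD' a ha ha' => by_contra fun hne => disjoint_left.1 (hdisj D hD D' hD' hne) ha ha'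
  rintro ℓ hℓ A hA B hB C hC hAB hAC hBC ⟨x, hxℓ, hxA⟩ ⟨y, hyℓ, hyB⟩ ⟨z, hzℓ, hzC⟩
  have hN3 : N.Indep {x, y, z} := by
    refine (hindep _).2 ⟨?_, fun c hc => encard_le_one_iff.2 fun a b ha hb => ?_⟩
    · rintro _ (rfl | rfl | rfl) <;> rw [← hPE]
      exacts [⟨A, hA, hxA⟩, ⟨B, hB, hyB⟩, ⟨C, hC, hzC⟩]
    · rcases ha.1 with rfl | rfl | rfl <;> rcases hb.1 with rfl | rfl | rfl <;> grind
  have hne {D D' : Set α} (hD : D ∈ P) (hD' : D' ∈ P) (hDD' : D ≠ D') {a b : α} (ha : a ∈ D)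
      (hb : b ∈ D') : a ≠ b := fun e => hDD' (hsame D hD D' hD' a ha (e ▸ hb))
  have h3 : ({x, y, z} : Set α).encard = 3 := encard_eq_three.2
    ⟨x, y, z, hne hA hB hAB hxA hyB, hne hA hC hAC hxA hzC, hne hB hC hBC hyB hzC, rfl⟩
  have h2 := hL ℓ hℓ _ (by rintro _ (rfl | rfl | rfl) <;> assumption) (hred.2 _ hN3)
  rw [h3] at h2
  exact absurd h2 (by norm_num)

section Partition

variable {S : Set α} {L P : Set (Set α)}

theorem IsRainbowFree.isRainbowFreeTripartition (hrb : IsRainbowFree L P)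
    (hPL : IsProjectiveIncidence S L) (hPS : ⋃₀ P = S) (hdisj : P.PairwiseDisjoint id)
    {A B C : Set α} (hA : A ∈ P) (hB : B ∈ P) (hC : C ∈ P) (hAB : A ≠ B) (hAC : A ≠ C)
    (hBC : B ≠ C) {x y z : α} (hy : y ∈ A) (hz : z ∈ B) (hx : x ∈ C) :
    IsRainbowFreeTripartition L S A B C := by
  have hsub {D : Set α} (hD : D ∈ P) : D ⊆ S := hPS ▸ subset_sUnion_of_mem hD
  have hd {D D' : Set α} (hD : D ∈ P) (hD' : D' ∈ P) (hne : D ≠ D') : Disjoint D D' :=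
    hdisj hD hD' hne
  refine ⟨Subset.antisymm (union_subset (union_subset (hsub hA) (hsub hB)) (hsub hC))
    fun s hs => ?_, hd hA hB hAB, hd hA hC hAC, hd hB hC hBC,
    fun ℓ hℓ => hrb ℓ hℓ A hA B hB C hC hAB hAC hBC⟩
  obtain ⟨D, hD, hsD⟩ := hPS ▸ hs
  by_contra hsABC
  have hDA : D ≠ A := fun e => hsABC (Or.inl (Or.inl (e ▸ hsD)))
  have hDB : D ≠ B := fun e => hsABC (Or.inl (Or.inr (e ▸ hsD)))
  have hDC : D ≠ C := fun e => hsABC (Or.inr (e ▸ hsD))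
  obtain ⟨m, hm, hym, hzm⟩ :=
    hPL.exists_line (hsub hA hy) (hsub hB hz) ((hd hA hB hAB).ne_of_mem hy hz)
  obtain ⟨ℓ, hℓ, hsℓ, hxℓ⟩ :=
    hPL.exists_line hs (hsub hC hx) ((hd hD hC hDC).ne_of_mem hsD hx)
  have hℓm : ℓ ≠ m := by
    rintro rfl
    exact hrb ℓ hℓ A hA B hB C hC hAB hAC hBC ⟨y, hym, hy⟩ ⟨z, hzm, hz⟩ ⟨x, hxℓ, hx⟩
  -- the class `E` of the point `p` where `ℓ = sx` meets `m = yz` makes `ℓ` or `m` rainbow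
  obtain ⟨p, hpℓ, hpm⟩ := hPL.inter_nonempty hℓ hm hℓm
  obtain ⟨E, hE, hpE⟩ := hPS ▸ hPL.subset_of_mem m hm hpm
  by_cases hEA : E = A
  · exact hrb ℓ hℓ D hD C hC A hA hDC hDA hAC.symm ⟨s, hsℓ, hsD⟩ ⟨x, hxℓ, hx⟩
      ⟨p, hpℓ, hEA ▸ hpE⟩
  by_cases hEB : E = B
  · exact hrb ℓ hℓ D hD C hC B hB hDC hDB hBC.symm ⟨s, hsℓ, hsD⟩ ⟨x, hxℓ, hx⟩
      ⟨p, hpℓ, hEB ▸ hpE⟩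
  exact hrb m hm A hA B hB E hE hAB (Ne.symm hEA) (Ne.symm hEB) ⟨y, hym, hy⟩ ⟨z, hzm, hz⟩
    ⟨p, hpm, hpE⟩

theorem exists_subset_union_of_not_exists_three (hPS : ⋃₀ P = S) (hS : S.Nonempty)
    (h3 : ¬ ∃ A ∈ P, ∃ B ∈ P, ∃ C ∈ P,
      A ≠ B ∧ A ≠ C ∧ B ≠ C ∧ A.Nonempty ∧ B.Nonempty ∧ C.Nonempty) :
    ∃ A ∈ P, ∃ B ∈ P, S ⊆ A ∪ B := by
  obtain ⟨s₀, hs₀⟩ := hS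
  obtain ⟨A, hA, hs₀A⟩ := hPS ▸ hs₀
  by_cases hB : ∃ B ∈ P, A ≠ B ∧ B.Nonempty
  · obtain ⟨B, hB, hAB, hBne⟩ := hB
    refine ⟨A, hA, B, hB, fun s hs => ?_⟩
    obtain ⟨C, hC, hsC⟩ := hPS ▸ hs
    by_contra hsAB
    exact h3 ⟨A, hA, B, hB, C, hC, hAB, fun e => hsAB (Or.inl (e ▸ hsC)),
      fun e => hsAB (Or.inr (e ▸ hsC)), ⟨s₀, hs₀A⟩, hBne, ⟨s, hsC⟩⟩
  · refine ⟨A, hA, A, hA, fun s hs => ?_⟩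
    obtain ⟨C, hC, hsC⟩ := hPS ▸ hs
    obtain rfl : A = C := by_contra fun hAC => hB ⟨C, hC, hAC, s, hsC⟩
    exact Or.inl hsC

theorem exists_halfPlaneBound (hPL : IsProjectiveIncidence S L) (hS : S.Finite) {q : ℕ}
    (hline : ∀ ℓ ∈ L, ℓ.ncard = q + 1) (hcard : S.ncard = q ^ 2 + q + 1) (hPS : ⋃₀ P = S)
    (hdisj : P.PairwiseDisjoint id) (hrb : IsRainbowFree L P) :
    ∃ c ∈ P, HalfPlaneBound q c.ncard := by
  by_cases h3 : ∃ A ∈ P, ∃ B ∈ P, ∃ C ∈ P,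
      A ≠ B ∧ A ≠ C ∧ B ≠ C ∧ A.Nonempty ∧ B.Nonempty ∧ C.Nonempty
  · obtain ⟨A, hA, B, hB, C, hC, hAB, hAC, hBC, ⟨y, hy⟩, ⟨z, hz⟩, ⟨x, hx⟩⟩ := h3
    rcases (hrb.isRainbowFreeTripartition hPL hPS hdisj hA hB hC hAB hAC hBC hy hz
      hx).halfPlaneBound hPL hS hline hcard hy hz hx with h | h | h
    exacts [⟨A, hA, h⟩, ⟨B, hB, h⟩, ⟨C, hC, h⟩]
  · obtain ⟨A, hA, B, hB, hSAB⟩ := exists_subset_union_of_not_exists_three hPS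
      (nonempty_of_ncard_ne_zero (by omega)) h3
    have hAB : q ^ 2 + q + 1 ≤ A.ncard + B.ncard := hcard ▸
      (ncard_le_ncard hSAB ((hS.subset (hPS ▸ subset_sUnion_of_mem hA)).union
        (hS.subset (hPS ▸ subset_sUnion_of_mem hB)))).trans (ncard_union_le A B)
    rcases le_total A.ncard B.ncard with h | h
    · exact ⟨B, hB, halfPlaneBound_of_le_two_mul (by omega)⟩
    · exact ⟨A, hA, halfPlaneBound_of_le_two_mul (by omega)⟩

end Partition

theorem statement_15_general (S : Set α) (L : Set (Set α)) (q : ℕ) (hfin : S.Finite)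
    (hLS : ∀ ℓ ∈ L, ℓ ⊆ S)
    (hP1 : ∀ p ∈ S, ∀ p' ∈ S, p ≠ p' → ∃! ℓ, ℓ ∈ L ∧ p ∈ ℓ ∧ p' ∈ ℓ)
    (hP2 : ∀ ℓ ∈ L, ∀ ℓ' ∈ L, ℓ ≠ ℓ' → ∃! p, p ∈ ℓ ∩ ℓ')
    (horder : ∀ ℓ ∈ L, ℓ.encard = ((q + 1 : ℕ) : ℕ∞))
    (hcard : S.encard = ((q ^ 2 + q + 1 : ℕ) : ℕ∞))
    (M : Matroid α) (hE : M.E = S)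
    (hInd : ∀ X, M.Indep X ↔ X ⊆ S ∧
      (X.encard ≤ 2 ∨ (X.encard = 3 ∧ ∀ ℓ ∈ L, ¬X ⊆ ℓ)))
    (N : Matroid α) (P : Set (Set α))
    (hN : N.IsPartitionMatroid P) (hred : N.Reduction M) :
    (Odd q → ∃ c ∈ P, (((q ^ 2 + q) / 2 : ℕ) : ℕ∞) ≤ c.encard) ∧
    (Even q → ∃ c ∈ P, (((q ^ 2 + q + 2) / 2 : ℕ) : ℕ∞) ≤ c.encard) := by
  have hPS : ⋃₀ P = S := hN.1.trans (hred.1.trans hE)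
  have hrb : IsRainbowFree L P := hN.isRainbowFree hred fun ℓ hℓ X hXℓ hX =>
    ((hInd X).1 hX).2.resolve_right fun h => h.2 ℓ hℓ hXℓ
  have hline : ∀ ℓ ∈ L, ℓ.ncard = q + 1 := fun ℓ hℓ => by
    rw [ncard_def, horder ℓ hℓ, ENat.toNat_natCast]
  have hcard' : S.ncard = q ^ 2 + q + 1 := by rw [ncard_def, hcard, ENat.toNat_natCast]
  obtain ⟨c, hc, hodd, heven⟩ := exists_halfPlaneBound ⟨hLS, hP1, hP2⟩ hfin hline hcard' hPS
    (fun c hc c' hc' => hN.2.1 c hc c' hc') hrb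
  have hcard_c : (c.ncard : ℕ∞) = c.encard :=
    (hfin.subset (hPS ▸ subset_sUnion_of_mem hc)).cast_ncard_eq
  exact ⟨fun _ => ⟨c, hc, hcard_c ▸ Nat.cast_le.2 (by omega)⟩,
    fun he => ⟨c, hc, hcard_c ▸ Nat.cast_le.2 (by have := heven he; omega)⟩⟩

/-- Let `M` be the rank-3 paving matroid defined by the lines of a projective plane of
order `q` (independent sets: sets of at most 3 non-collinear points). Every partition
matroid `N ⪯ M` has a class of size at least `(|S|-1)/2` if `q` is odd, and at least
`(|S|+1)/2` if `q` is even, where `|S| = q² + q + 1`. -/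
theorem statement_15 (S : Set α) (L : Set (Set α)) (q : ℕ) (hfin : S.Finite)
    (hLS : ∀ ℓ ∈ L, ℓ ⊆ S)
    (hP1 : ∀ p ∈ S, ∀ p' ∈ S, p ≠ p' → ∃! ℓ, ℓ ∈ L ∧ p ∈ ℓ ∧ p' ∈ ℓ)
    (hP2 : ∀ ℓ ∈ L, ∀ ℓ' ∈ L, ℓ ≠ ℓ' → ∃! p, p ∈ ℓ ∩ ℓ')
    (hP3 : ∃ p₁ p₂ p₃ p₄ : α, ({p₁, p₂, p₃, p₄} : Set α) ⊆ S ∧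
      ({p₁, p₂, p₃, p₄} : Set α).encard = 4 ∧
      ∀ ℓ ∈ L, (({p₁, p₂, p₃, p₄} : Set α) ∩ ℓ).encard ≤ 2)
    (horder : ∀ ℓ ∈ L, ℓ.encard = ((q + 1 : ℕ) : ℕ∞))
    (hcard : S.encard = ((q ^ 2 + q + 1 : ℕ) : ℕ∞))
    (M : Matroid α) (hE : M.E = S)
    (hInd : ∀ X, M.Indep X ↔ X ⊆ S ∧
      (X.encard ≤ 2 ∨ (X.encard = 3 ∧ ∀ ℓ ∈ L, ¬X ⊆ ℓ)))
    (N : Matroid α) (P : Set (Set α))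
    (hN : N.IsPartitionMatroid P) (hred : N.Reduction M) :
    (Odd q → ∃ c ∈ P, (((q ^ 2 + q) / 2 : ℕ) : ℕ∞) ≤ c.encard) ∧
    (Even q → ∃ c ∈ P, (((q ^ 2 + q + 2) / 2 : ℕ) : ℕ∞) ≤ c.encard) :=
  statement_15_general S L q hfin hLS hP1 hP2 horder hcard M hE hInd N P hN hred
end

section
/- Let k ≥ 2, let S be a set of size k²−k partitioned as S = S_1 ∪ … ∪ S_k into classes of size k−1 each, and let M = (S, I) be the matroid in which X ⊆ S is independent if and only if |X ∩ S_i| ≤ 1 for i = 1,…,k and |X| ≤ k−1. Then M is a k-colorable matroid of rank k−1, and every partition matroid N with N ⪯ M satisfies χ(N) ≥ 2k−2. -/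
open Set

variable {α : Type*}

/-!
Colour the block `S' i` injectively with the `k - 1` colours other than `i`: every colour class
then meets each block at most once and misses one block, so it is independent. In a partition
matroid `N ⪯ M`, two elements of one block are `M`-dependent, so each block lies inside a single
class of `N`; a transversal of all `k` blocks has size `k`, more than the rank of `M`, so two blocks
share a class, which thus has at least `2 (k - 1)` elements.
-/

open Function

namespace Set

variable {ι : Type*}

lemma encard_compl_singleton_fin {k : ℕ} (i : Fin k) :
    ({i}ᶜ : Set (Fin k)).encard = ((k - 1 : ℕ) : ℕ∞) := by
  simpa [Finset.card_compl] using encard_coe_eq_coe_finsetCard ({i}ᶜ : Finset (Fin k))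

lemma encard_le_of_inter_subsingleton {S' : ι → Set α} {X : Set α} {J : Set ι}
    (hX : X ⊆ ⋃ i ∈ J, S' i) (hsub : ∀ i, (X ∩ S' i).Subsingleton) : X.encard ≤ J.encard := by
  choose cls hclsJ hclsS using fun x : X => mem_iUnion₂.1 (hX x.2)
  refine Embedding.encard_le ⟨fun x => ⟨cls x, hclsJ x⟩, fun x y hxy => ?_⟩
  have hxy : cls x = cls y := congrArg Subtype.val hxy
  exact Subtype.ext (hsub (cls x) ⟨x.2, hclsS x⟩ ⟨y.2, hxy ▸ hclsS y⟩)

section Disjoint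

variable {S' : ι → Set α} (hdisj : Pairwise (Disjoint on S'))
include hdisj

lemma eq_of_mem_of_pairwise_disjoint {i j : ι} {x : α} (hi : x ∈ S' i) (hj : x ∈ S' j) :
    i = j :=
  hdisj.eq (not_disjoint_iff.2 ⟨x, hi, hj⟩)

lemma injective_of_pairwise_disjoint {e : ι → α} (he : ∀ i, e i ∈ S' i) : e.Injective :=
  fun i j hij => eq_of_mem_of_pairwise_disjoint hdisj (he i) (hij ▸ he j)

lemma subsingleton_image_inter_of_pairwise_disjoint {e : ι → α} (he : ∀ i, e i ∈ S' i)
    (J : Set ι) (i : ι) : (e '' J ∩ S' i).Subsingleton := by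
  rintro _ ⟨⟨a, -, rfl⟩, ha⟩ _ ⟨⟨b, -, rfl⟩, hb⟩
  rw [eq_of_mem_of_pairwise_disjoint hdisj (he a) ha,
    eq_of_mem_of_pairwise_disjoint hdisj (he b) hb]

lemma exists_injOn_mapsTo_compl [Finite ι] [Nonempty ι]
    (hcard : ∀ i, (S' i).encard ≤ ({i}ᶜ : Set ι).encard) :
    ∃ col : α → ι, ∀ i, InjOn col (S' i) ∧ MapsTo col (S' i) {i}ᶜ := by
  classical
  have hcol : ∀ i, ∃ g : α → ι, S' i ⊆ g ⁻¹' {i}ᶜ ∧ InjOn g (S' i) := fun i =>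
    ((toFinite _).finite_of_encard_le (hcard i)).exists_injOn_of_encard_le (hcard i)
  choose g hgmaps hginj using hcol
  let col : α → ι := fun x => if h : ∃ i, x ∈ S' i then g h.choose x else Classical.arbitrary ι
  have hcol_eq : ∀ i, EqOn col (g i) (S' i) := fun i x hx => by
    have h : ∃ i, x ∈ S' i := ⟨i, hx⟩
    simp only [col, dif_pos h, eq_of_mem_of_pairwise_disjoint hdisj h.choose_spec hx]
  exact ⟨col, fun i => ⟨(hginj i).congr (hcol_eq i).symm,
    fun x hx => (hcol_eq i hx).symm ▸ hgmaps i hx⟩⟩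

end Disjoint

end Set

open Set

namespace Matroid

lemma rkE_eq_encard_of_indep {M : Matroid α} {I : Set α} (hI : M.Indep I)
    (hle : ∀ X, M.Indep X → X.encard ≤ I.encard) : M.rkE = I.encard :=
  le_antisymm (iSup₂_le hle) (le_biSup _ hI)

namespace IsPartitionMatroid

variable {N M : Matroid α} {P : Set (Set α)} (hP : N.IsPartitionMatroid P)
include hP

lemma exists_mem {x : α} (hx : x ∈ N.E) : ∃ c ∈ P, x ∈ c := by
  rwa [← hP.1, mem_sUnion] at hx

lemma eq_of_mem {c c' : Set α} (hc : c ∈ P) (hc' : c' ∈ P) {x : α} (hx : x ∈ c)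
    (hx' : x ∈ c') : c = c' :=
  by_contra fun hne => disjoint_left.mp (hP.2.1 c hc c' hc' hne) hx hx'

lemma subset_ground {c : Set α} (hc : c ∈ P) : c ⊆ N.E :=
  hP.1 ▸ subset_sUnion_of_mem hc

lemma indep_iff_subsingleton {X : Set α} :
    N.Indep X ↔ X ⊆ N.E ∧ ∀ c ∈ P, (X ∩ c).Subsingleton := by
  simp only [hP.2.2, encard_le_one_iff_subsingleton]

lemma indep_pair {x y : α} {c c' : Set α} (hc : c ∈ P) (hc' : c' ∈ P) (hne : c ≠ c')
    (hx : x ∈ c) (hy : y ∈ c') : N.Indep {x, y} := by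
  refine hP.indep_iff_subsingleton.2
    ⟨pair_subset (hP.subset_ground hc hx) (hP.subset_ground hc' hy), fun d hd => ?_⟩
  have hsep : x ∈ d → y ∈ d → False := fun hxd hyd =>
    hne ((hP.eq_of_mem hc hd hx hxd).trans (hP.eq_of_mem hd hc' hyd hy))
  rintro a ⟨rfl | rfl, ha⟩ b ⟨rfl | rfl, hb⟩
  exacts [rfl, (hsep ha hb).elim, (hsep hb ha).elim, rfl]

lemma exists_superset {A : Set α} (hAE : A ⊆ N.E) (hA : A.Nonempty)
    (hdep : ∀ x ∈ A, ∀ y ∈ A, N.Indep {x, y} → x = y) : ∃ c ∈ P, A ⊆ c := by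
  obtain ⟨a, ha⟩ := hA
  obtain ⟨c, hc, hac⟩ := hP.exists_mem (hAE ha)
  refine ⟨c, hc, fun y hy => by_contra fun hyc => ?_⟩
  obtain ⟨c', hc', hyc'⟩ := hP.exists_mem (hAE hy)
  have hne : c ≠ c' := by rintro rfl; exact hyc hyc'
  exact hyc (hdep a ha y hy (hP.indep_pair hc hc' hne hac hyc') ▸ hac)

lemma indep_range {ι : Type*} {e : ι → α} {c : ι → Set α} (hc : ∀ i, c i ∈ P)
    (he : ∀ i, e i ∈ c i) (hinj : c.Injective) : N.Indep (range e) := by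
  refine hP.indep_iff_subsingleton.2
    ⟨range_subset_iff.2 fun i => hP.subset_ground (hc i) (he i), fun d hd => ?_⟩
  rintro _ ⟨⟨i, rfl⟩, hi⟩ _ ⟨⟨j, rfl⟩, hj⟩
  rw [hinj ((hP.eq_of_mem (hc i) hd (he i) hi).trans (hP.eq_of_mem hd (hc j) hj (he j)))]

lemma exists_union_subset {ι : Type*} {S' : ι → Set α} (hNM : N.Reduction M)
    (hSE : ∀ i, S' i ⊆ N.E) (hne : ∀ i, (S' i).Nonempty)
    (hpair : ∀ i, ∀ x ∈ S' i, ∀ y ∈ S' i, M.Indep {x, y} → x = y)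
    (htrans : ∀ e : ι → α, (∀ i, e i ∈ S' i) → ¬ M.Indep (range e)) :
    ∃ c ∈ P, ∃ i j, i ≠ j ∧ S' i ∪ S' j ⊆ c := by
  have hcls : ∀ i, ∃ c ∈ P, S' i ⊆ c := fun i =>
    hP.exists_superset (hSE i) (hne i) fun x hx y hy hxy => hpair i x hx y hy (hNM.2 _ hxy)
  choose c hcP hSc using hcls
  choose e he using hne
  have hc : ¬ c.Injective := fun hinj =>
    htrans e he (hNM.2 _ (hP.indep_range hcP (fun i => hSc i (he i)) hinj))
  obtain ⟨i, j, hij, hne⟩ := not_injective_iff.1 hc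
  exact ⟨c i, hcP i, i, j, hne, union_subset (hSc i) (hij ▸ hSc j)⟩

end IsPartitionMatroid

def IsTruncatedPartition (M : Matroid α) {ι : Type*} (S' : ι → Set α) (r : ℕ) : Prop :=
  ∀ X, M.Indep X ↔ X ⊆ ⋃ i, S' i ∧ X.encard ≤ r ∧ ∀ i, (X ∩ S' i).encard ≤ 1

namespace IsTruncatedPartition

variable {M : Matroid α}

section

variable {ι : Type*} {S' : ι → Set α} {r : ℕ}

lemma eq_of_indep_pair (hM : M.IsTruncatedPartition S' r) {i : ι} {x y : α} (hx : x ∈ S' i)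
    (hy : y ∈ S' i) (hxy : M.Indep {x, y}) : x = y :=
  encard_le_one_iff_subsingleton.1 (((hM _).1 hxy).2.2 i) ⟨mem_insert x _, hx⟩
    ⟨mem_insert_of_mem x rfl, hy⟩

lemma not_indep_range (hM : M.IsTruncatedPartition S' r) (hdisj : Pairwise (Disjoint on S'))
    (hr : (r : ℕ∞) < ENat.card ι) {e : ι → α} (he : ∀ i, e i ∈ S' i) : ¬ M.Indep (range e) :=
  fun hind =>
    ((injective_of_pairwise_disjoint hdisj he).encard_range.trans ((hM _).1 hind).2.1).not_gt hr

lemma rkE_eq (hM : M.IsTruncatedPartition S' r) (hdisj : Pairwise (Disjoint on S'))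
    (hne : ∀ i, (S' i).Nonempty) {J : Set ι} (hJ : J.encard = r) : M.rkE = r := by
  choose e he using hne
  have hcard : (e '' J).encard = r := by
    rw [(injective_of_pairwise_disjoint hdisj he).encard_image, hJ]
  have hind : M.Indep (e '' J) :=
    (hM _).2 ⟨image_subset_iff.2 fun i _ => mem_iUnion_of_mem i (he i), hcard.le,
      fun i => encard_le_one_iff_subsingleton.2
        (subsingleton_image_inter_of_pairwise_disjoint hdisj he J i)⟩
  rw [rkE_eq_encard_of_indep hind fun X hX => hcard ▸ ((hM X).1 hX).2.1, hcard]

end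

lemma isColorable {k : ℕ} (hk : 0 < k) {S' : Fin k → Set α}
    (hM : M.IsTruncatedPartition S' (k - 1)) (hdisj : Pairwise (Disjoint on S'))
    (hcard : ∀ i, (S' i).encard ≤ ((k - 1 : ℕ) : ℕ∞)) (hE : M.E = ⋃ i, S' i) :
    M.IsColorable k := by
  have : Nonempty (Fin k) := ⟨⟨0, hk⟩⟩
  obtain ⟨col, hcol⟩ := exists_injOn_mapsTo_compl hdisj fun i =>
    (hcard i).trans (encard_compl_singleton_fin i).ge
  have hsub : ∀ i j, ((⋃ i, S' i) ∩ col ⁻¹' {j} ∩ S' i).Subsingleton :=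
    fun i _ _ ha _ hb => (hcol i).1 ha.2 hb.2 (ha.1.2.trans hb.1.2.symm)
  have hcover : ∀ j, (⋃ i, S' i) ∩ col ⁻¹' {j} ⊆ ⋃ i ∈ ({j}ᶜ : Set (Fin k)), S' i := by
    rintro j x ⟨hx, hxj⟩
    obtain ⟨i, hi⟩ := mem_iUnion.1 hx
    exact mem_biUnion (fun hij : i = j => (hcol i).2 hi (hij ▸ hxj)) hi
  refine ⟨fun j => (⋃ i, S' i) ∩ col ⁻¹' {j}, fun j => (hM _).2 ⟨inter_subset_left, ?_,
    fun i => encard_le_one_iff_subsingleton.2 (hsub i j)⟩, ?_, ?_⟩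
  · rw [← encard_compl_singleton_fin j]
    exact encard_le_of_inter_subsingleton (hcover j) fun i => hsub i j
  · ext x
    simp [hE]
  · exact fun j j' hjj' => ((disjoint_singleton.2 hjj').preimage col).mono
      inter_subset_right inter_subset_right

end IsTruncatedPartition

end Matroid

/-- The laminar matroid on a set `S` of size `k² - k` partitioned into `k` classes of size
`k - 1`, whose independent sets are the sets of size at most `k - 1` meeting every class
at most once, is a `k`-colorable matroid of rank `k - 1`, and every partition matroid
`N ⪯ M` has a class of size at least `2k - 2`. -/
theorem statement_17 (k : ℕ) (hk : 2 ≤ k) (S : Set α) (S' : Fin k → Set α)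
    (hdisj : Pairwise fun i j => Disjoint (S' i) (S' j))
    (hunion : (⋃ i, S' i) = S)
    (hcard : ∀ i, (S' i).encard = ((k - 1 : ℕ) : ℕ∞))
    (M : Matroid α) (hE : M.E = S)
    (hInd : ∀ X, M.Indep X ↔ X ⊆ S ∧ X.encard ≤ ((k - 1 : ℕ) : ℕ∞) ∧
      ∀ i, (X ∩ S' i).encard ≤ 1) :
    M.IsColorable k ∧ M.rkE = ((k - 1 : ℕ) : ℕ∞) ∧
      ∀ (N : Matroid α) (P : Set (Set α)), N.IsPartitionMatroid P → N.Reduction M →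
        ∃ c ∈ P, ((2 * k - 2 : ℕ) : ℕ∞) ≤ c.encard := by
  subst hunion
  have hM : M.IsTruncatedPartition S' (k - 1) := hInd
  have hne : ∀ i, (S' i).Nonempty := fun i =>
    encard_pos.1 (by rw [hcard i]; exact_mod_cast (by omega : 0 < k - 1))
  have hrank : ((k - 1 : ℕ) : ℕ∞) < ENat.card (Fin k) := by
    rw [ENat.card_eq_coe_fintype_card, Fintype.card_fin]
    exact_mod_cast (by omega : k - 1 < k)
  refine ⟨hM.isColorable (by omega) hdisj (fun i => (hcard i).le) hE,
    hM.rkE_eq hdisj hne (encard_compl_singleton_fin ⟨0, by omega⟩), fun N P hP hNM => ?_⟩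
  obtain ⟨c, hc, i, j, hij, hsub⟩ := hP.exists_union_subset hNM
    (fun i => hNM.1 ▸ hE ▸ subset_iUnion S' i) hne
    (fun i x hx y hy => hM.eq_of_indep_pair hx hy) (fun e => hM.not_indep_range hdisj hrank)
  refine ⟨c, hc, ?_⟩
  calc ((2 * k - 2 : ℕ) : ℕ∞) = (S' i ∪ S' j).encard := by
        rw [encard_union_eq (hdisj hij), hcard, hcard, ← Nat.cast_add]
        congr 1
        omega
    _ ≤ c.encard := encard_mono hsub
end

section
/- Let G = (A, B; E) be a bipartite graph, S ⊆ A, and k ≥ 1 an integer. Suppose G contains k matchings, each of size |B|, such that every vertex in S is covered by at most k−1 of them. Then for every X ⊆ A, k·(|A|−|B|) − |S \ X| ≥ k·max{|Y|−|N(Y)| : Y ⊆ X}, where N(Y) denotes the set of neighbors in B of the vertex set Y ⊆ A. -/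
open Set

variable {α : Type*}

/-! Every matching `f i` misses exactly `|A| - |B|` vertices of `A`. Those it misses in `Y`
account for the excess `|Y| - |N(Y)|`, since it maps into `Y` only from `N(Y)`; so at most
`|A| - |B| - (|Y| - |N(Y)|)` vertices of `S \ X` can be missed as well. Summing over the `k`
matchings, and using that every vertex of `S` is missed by at least one of them, gives the
bound. -/

namespace Set

theorem ncard_le_sum_ncard_inter {ι : Type*} [Fintype ι] (T : Set α) (M : ι → Set α)
    (hT : T ⊆ ⋃ i, M i) : T.ncard ≤ ∑ i, (T ∩ M i).ncard :=
  calc T.ncard = (⋃ i, T ∩ M i).ncard := by rw [← inter_iUnion, inter_eq_left.2 hT]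
    _ ≤ ∑ i, (T ∩ M i).ncard := ncard_iUnion_le_of_fintype _

end Set

section Matching

variable {A B : Type*} [Finite B] (R : A → B → Prop)

theorem ncard_inter_range_le_ncard_neighbors {f : B → A} (hedge : ∀ b, R (f b) b)
    (Y : Set A) : (Y ∩ range f).ncard ≤ {b | ∃ a ∈ Y, R a b}.ncard := by
  rw [← image_preimage_eq_inter_range]
  exact (ncard_image_le (toFinite _)).trans (ncard_le_ncard fun b hb => ⟨f b, hb, hedge b⟩)

theorem ncard_add_ncard_inter_compl_range_le [Finite A] {f : B → A} (hf : Function.Injective f)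
    (hedge : ∀ b, R (f b) b) {Y Z : Set A} (hYZ : Disjoint Y Z) :
    Y.ncard + (Z ∩ (range f)ᶜ).ncard + Nat.card B ≤
      {b | ∃ a ∈ Y, R a b}.ncard + Nat.card A := by
  have hmatched := ncard_inter_range_le_ncard_neighbors R hedge Y
  have hunmatched : (Y \ range f).ncard + (Z ∩ (range f)ᶜ).ncard ≤ (range f)ᶜ.ncard := by
    rw [← ncard_union_eq (hYZ.mono sdiff_subset inter_subset_left)]
    exact ncard_le_ncard (union_subset (sdiff_subset_compl _ _) inter_subset_right)
  have hsplit := ncard_inter_add_ncard_sdiff_eq_ncard Y (range f)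
  have hcompl := ncard_compl_add_ncard (range f)
  rw [ncard_range_of_injective hf] at hcompl
  omega

end Matching

/-- If a bipartite graph (edge relation `R` between finite vertex types `A` and `B`)
contains `k` matchings of size `|B|` (i.e. injections `B → A` along edges) such that each
vertex of `S ⊆ A` is covered by at most `k - 1` of them, then for every `X ⊆ A` and every
`Y ⊆ X` we have `k·(|Y| - |N(Y)|) ≤ k·(|A| - |B|) - |S \ X|`. -/
theorem statement_18 {A B : Type*} [Fintype A] [Fintype B] (R : A → B → Prop) (S : Set A)
    (k : ℕ) (hk : 1 ≤ k) (f : Fin k → B → A)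
    (hinj : ∀ i, Function.Injective (f i))
    (hedge : ∀ i b, R (f i b) b)
    (hcov : ∀ s ∈ S, ({i : Fin k | ∃ b, f i b = s}).ncard ≤ k - 1) :
    ∀ X : Set A, ∀ Y ⊆ X,
      (k : ℤ) * ((Y.ncard : ℤ) - ({b : B | ∃ a ∈ Y, R a b}).ncard) ≤
        (k : ℤ) * ((Fintype.card A : ℤ) - (Fintype.card B : ℤ)) - (S \ X).ncard := by
  intro X Y hYX
  have hmissed : S \ X ⊆ ⋃ i, (range (f i))ᶜ := fun s hs => by
    have hlt : {i : Fin k | ∃ b, f i b = s}.ncard < k := (hcov s hs.1).trans_lt (by omega)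
    obtain ⟨i, hi⟩ := (ne_univ_iff_exists_notMem {i : Fin k | ∃ b, f i b = s}).1 fun huniv => by
      rw [huniv, ncard_univ, Nat.card_fin] at hlt
      exact hlt.false
    exact mem_iUnion.2 ⟨i, hi⟩
  have hcount := ncard_le_sum_ncard_inter (S \ X) _ hmissed
  have hsum : ∑ i, (Y.ncard + (S \ X ∩ (range (f i))ᶜ).ncard + Nat.card B) ≤
      ∑ _i : Fin k, ({b | ∃ a ∈ Y, R a b}.ncard + Nat.card A) :=
    Finset.sum_le_sum fun i _ => ncard_add_ncard_inter_compl_range_le R (hinj i) (hedge i)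
      (disjoint_sdiff_right.mono_left hYX)
  simp only [Finset.sum_add_distrib, Finset.sum_const, Finset.card_univ, Fintype.card_fin,
    smul_eq_mul, Nat.card_eq_fintype_card] at hsum
  zify at hsum hcount
  linarith
end

section
/- Let M = (S, I) be a loopless matroid that can be reduced to a 2χ(M)-colorable partition matroid. Then for every k with 1 ≤ k ≤ rank(M), the k-truncation M' = (M)_k of M (the matroid with independent sets {X ∈ I : |X| ≤ k}) can be reduced to a 2χ(M')-colorable partition matroid; that is, the family of matroids M reducible to a 2χ(M)-colorable partition matroid is closed under truncation. -/
open Set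

variable {α : Type*}

/-!
Let `x = χ(M')`. An `x`-coloring of `M'` is also one of `M`, so `χ(M) ≤ x`, and since the
independent sets of `M'` have at most `k` elements, `|S| ≤ k x`. Merge classes of the given
partition two at a time as long as the union has at most `2x` elements. In the final coarsening
any two classes together have more than `2x` elements, so at most one class has at most `x`
elements, which forces at most `k` classes. Its partition matroid is a reduction of the original
one, hence of `M`, and its independent sets have at most `k` elements, so it is a reduction
of `M'`.
-/

/-- The class of `P` containing `a` (junk when `a ∉ ⋃₀ P`). -/
noncomputable def partOf (P : Set (Set α)) (a : α) : Set α :=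
  Classical.epsilon fun c => c ∈ P ∧ a ∈ c

section Partition

variable {P : Set (Set α)} {a : α} {c : Set α}

theorem partOf_spec (ha : a ∈ ⋃₀ P) : partOf P a ∈ P ∧ a ∈ partOf P a :=
  Classical.epsilon_spec (p := fun c => c ∈ P ∧ a ∈ c) ha

theorem partOf_eq (hP : P.PairwiseDisjoint id) (hc : c ∈ P) (ha : a ∈ c) : partOf P a = c :=
  have h := partOf_spec ⟨c, hc, ha⟩
  hP.elim_set h.1 hc a h.2 ha

theorem injOn_partOf_iff (hP : P.PairwiseDisjoint id) {X : Set α} (hX : X ⊆ ⋃₀ P) :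
    InjOn (partOf P) X ↔ ∀ c ∈ P, (X ∩ c).encard ≤ 1 := by
  refine ⟨fun h c hc => encard_le_one_iff.2 fun a b ha hb => ?_, fun h a ha b hb hab => ?_⟩
  · exact h ha.1 hb.1 ((partOf_eq hP hc ha.2).trans (partOf_eq hP hc hb.2).symm)
  · have hpa := partOf_spec (hX ha)
    exact encard_le_one_iff.1 (h _ hpa.1) a b ⟨ha, hpa.2⟩
      ⟨hb, hab ▸ (partOf_spec (hX hb)).2⟩

theorem Set.PairwiseDisjoint.finite_of_finite_sUnion (hP : P.PairwiseDisjoint id)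
    (h : (⋃₀ P).Finite) : P.Finite := by
  have h' : (⋃ c ∈ P, id c).Finite := by rwa [sUnion_eq_biUnion] at h
  refine ((hP.finite_biUnion_iff.1 h').2.insert ∅).subset fun c hc => ?_
  rcases c.eq_empty_or_nonempty with rfl | hne
  exacts [mem_insert _ _, mem_insert_of_mem _ ⟨hc, hne⟩]

end Partition

def mergeParts (Q : Set (Set α)) (c d : Set α) : Set (Set α) :=
  insert (c ∪ d) (Q \ {c, d})

section Coarsening

variable {P Q : Set (Set α)} {c d e : Set α}

theorem sUnion_mergeParts (hc : c ∈ Q) (hd : d ∈ Q) : ⋃₀ mergeParts Q c d = ⋃₀ Q := by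
  ext a
  simp only [mergeParts, sUnion_insert, mem_union, mem_sUnion, mem_sdiff, mem_insert_iff,
    mem_singleton_iff]
  constructor
  · rintro ((ha | ha) | ⟨e, ⟨he, -⟩, ha⟩)
    exacts [⟨c, hc, ha⟩, ⟨d, hd, ha⟩, ⟨e, he, ha⟩]
  · rintro ⟨e, he, ha⟩
    by_cases hecd : e = c ∨ e = d
    · rcases hecd with rfl | rfl <;> simp [ha]
    · exact Or.inr ⟨e, ⟨he, hecd⟩, ha⟩

theorem Set.PairwiseDisjoint.mergeParts (hQ : Q.PairwiseDisjoint id) (hc : c ∈ Q) (hd : d ∈ Q) :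
    (mergeParts Q c d).PairwiseDisjoint id := by
  refine pairwiseDisjoint_insert.2 ⟨hQ.subset sdiff_subset, fun e he _ => ?_⟩
  simp only [mem_sdiff, mem_insert_iff, mem_singleton_iff, not_or] at he
  exact disjoint_union_left.2 ⟨hQ hc he.1 (Ne.symm he.2.1), hQ hd he.1 (Ne.symm he.2.2)⟩

theorem exists_superset_mem_mergeParts (he : e ∈ Q) : ∃ f ∈ mergeParts Q c d, e ⊆ f := by
  by_cases hecd : e = c ∨ e = d
  · refine ⟨c ∪ d, mem_insert _ _, ?_⟩
    rcases hecd with rfl | rfl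
    exacts [subset_union_left, subset_union_right]
  · exact ⟨e, mem_insert_of_mem _ ⟨he, hecd⟩, subset_rfl⟩

theorem encard_mergeParts_lt (hQ : Q.Finite) (hc : c ∈ Q) (hd : d ∈ Q) (hcd : c ≠ d) :
    (mergeParts Q c d).encard < Q.encard := by
  have hrest : (Q \ {c, d}).encard + 2 = Q.encard := by
    rw [← encard_pair hcd, encard_sdiff_add_encard_of_subset (pair_subset hc hd)]
  have hfin : (Q \ {c, d}).encard ≠ ⊤ := (hQ.subset sdiff_subset).encard_lt_top.ne
  calc (mergeParts Q c d).encard ≤ (Q \ {c, d}).encard + 1 := encard_insert_le _ _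
    _ < (Q \ {c, d}).encard + 2 := (ENat.add_lt_add_iff_left hfin).2 (by norm_num)
    _ = Q.encard := hrest

theorem exists_coarsening_pairwise_encard_add_gt (hPfin : P.Finite) (hP : P.PairwiseDisjoint id)
    {C : ℕ∞} (hC : ∀ c ∈ P, c.encard ≤ C) :
    ∃ Q : Set (Set α), ⋃₀ Q = ⋃₀ P ∧ Q.PairwiseDisjoint id ∧ (∀ c ∈ P, ∃ d ∈ Q, c ⊆ d) ∧
      (∀ d ∈ Q, d.encard ≤ C) ∧ Q.Pairwise fun c d => C < c.encard + d.encard := by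
  -- take one with fewest classes; merging two classes of total size `≤ C` would give fewer
  let S := {Q : Set (Set α) | ⋃₀ Q = ⋃₀ P ∧ Q.PairwiseDisjoint id ∧
    (∀ c ∈ P, ∃ d ∈ Q, c ⊆ d) ∧ ∀ d ∈ Q, d.encard ≤ C}
  have hPS : P ∈ S := ⟨rfl, hP, fun c hc => ⟨c, hc, subset_rfl⟩, hC⟩
  obtain ⟨Q, ⟨hQP, hQ, hPQ, hQC⟩, hmin⟩ :=
    (InvImage.wf encard wellFounded_lt).has_min S ⟨P, hPS⟩
  refine ⟨Q, hQP, hQ, hPQ, hQC, fun c hc d hd hcd => lt_of_not_ge fun hle => ?_⟩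
  have hQfin : Q.Finite := finite_of_encard_le_coe ((not_lt.1 (hmin P hPS)).trans_eq
    hPfin.cast_ncard_eq.symm)
  refine hmin (mergeParts Q c d) ⟨(sUnion_mergeParts hc hd).trans hQP, hQ.mergeParts hc hd,
    fun e he => ?_, ?_⟩ (encard_mergeParts_lt hQfin hc hd hcd)
  · obtain ⟨f, hf, hef⟩ := hPQ e he
    obtain ⟨g, hg, hfg⟩ := exists_superset_mem_mergeParts (c := c) (d := d) hf
    exact ⟨g, hg, hef.trans hfg⟩
  · rintro e (rfl | ⟨he, -⟩)
    exacts [(encard_union_le c d).trans hle, hQC e he]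

theorem mul_encard_le_encard_sUnion (hQfin : Q.Finite) (hQ : Q.PairwiseDisjoint id) {a : ℕ∞}
    (ha : ∀ c ∈ Q, a ≤ c.encard) : a * Q.encard ≤ (⋃₀ Q).encard := by
  induction Q, hQfin using Set.Finite.induction_on with
  | empty => simp
  | @insert c Q hcQ _ ih =>
    obtain ⟨hQ', hc⟩ := pairwiseDisjoint_insert.1 hQ
    have hdisj : Disjoint c (⋃₀ Q) :=
      disjoint_sUnion_right.2 fun d hd => hc d hd (ne_of_mem_of_not_mem hd hcQ).symm
    rw [encard_insert_of_notMem hcQ, sUnion_insert, encard_union_eq hdisj, mul_add, mul_one,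
      add_comm c.encard]
    exact add_le_add (ih hQ' fun d hd => ha d (mem_insert_of_mem _ hd)) (ha c (mem_insert _ _))

theorem encard_le_of_pairwise_encard_add_gt (hQ : Q.PairwiseDisjoint id) {k x : ℕ} (hk : 1 ≤ k)
    (hsize : (⋃₀ Q).encard ≤ x * k)
    (hsum : Q.Pairwise fun c d => ((2 * x : ℕ) : ℕ∞) < c.encard + d.encard) :
    Q.encard ≤ k := by
  have hQfin : Q.Finite := hQ.finite_of_finite_sUnion (finite_of_encard_le_coe
    (hsize.trans_eq (by norm_cast)))
  by_contra! hkQ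
  let S := {c ∈ Q | c.encard ≤ x}
  have hS : S.encard ≤ 1 := encard_le_one_iff.2 fun c d hc hd => by_contra fun hcd =>
    (hsum hc.1 hd.1 hcd).not_ge (by push_cast; rw [two_mul]; exact add_le_add hc.2 hd.2)
  have hlarge : ∀ c ∈ Q \ S, (x + 1 : ℕ∞) ≤ c.encard :=
    fun c hc => Order.add_one_le_of_lt (lt_of_not_ge fun h => hc.2 ⟨hc.1, h⟩)
  have hkS : (k : ℕ∞) ≤ (Q \ S).encard := by
    refine (WithTop.add_le_add_iff_right ENat.one_ne_top).1 ?_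
    calc (k : ℕ∞) + 1 ≤ Q.encard := Order.add_one_le_of_lt hkQ
      _ ≤ (Q \ S).encard + S.encard := encard_le_encard_sdiff_add_encard Q S
      _ ≤ (Q \ S).encard + 1 := by gcongr
  have hbound : (((x + 1) * k : ℕ) : ℕ∞) ≤ ((x * k : ℕ) : ℕ∞) := by
    calc (((x + 1) * k : ℕ) : ℕ∞) ≤ (x + 1) * (Q \ S).encard := by push_cast; gcongr
      _ ≤ (⋃₀ (Q \ S)).encard :=
        mul_encard_le_encard_sUnion (hQfin.subset sdiff_subset) (hQ.subset sdiff_subset) hlarge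
      _ ≤ (⋃₀ Q).encard := encard_le_encard (sUnion_mono sdiff_subset)
      _ ≤ ((x * k : ℕ) : ℕ∞) := hsize.trans_eq (by norm_cast)
  have := Nat.cast_le.1 hbound
  nlinarith

end Coarsening

namespace Matroid

variable {M N N' : Matroid α} {P Q : Set (Set α)} {m : ℕ}

theorem IsPartitionMatroid.pairwiseDisjoint (hN : N.IsPartitionMatroid P) :
    P.PairwiseDisjoint id :=
  hN.2.1

theorem IsPartitionMatroid.indep_iff_injOn (hN : N.IsPartitionMatroid P) {X : Set α} :
    N.Indep X ↔ X ⊆ N.E ∧ InjOn (partOf P) X := by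
  rw [hN.2.2]
  refine and_congr_right fun hX => (injOn_partOf_iff hN.pairwiseDisjoint ?_).symm
  exact hN.1 ▸ hX

theorem exists_isPartitionMatroid (hP : P.PairwiseDisjoint id) :
    ∃ N : Matroid α, N.IsPartitionMatroid P := by
  refine ⟨(freeOn univ).comap (partOf P) ↾ ⋃₀ P, rfl, hP, fun X => ?_⟩
  simp only [restrict_indep_iff, comap_indep_iff, freeOn_indep_iff, subset_univ, true_and,
    restrict_ground_eq]
  exact ⟨fun h => ⟨h.2, (injOn_partOf_iff hP h.2).1 h.1⟩,
    fun h => ⟨(injOn_partOf_iff hP h.1).2 h.2, h.1⟩⟩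

theorem IsPartitionMatroid.encard_le_of_indep (hN : N.IsPartitionMatroid P) {X : Set α}
    (hX : N.Indep X) : X.encard ≤ P.encard := by
  obtain ⟨hXE, hinj⟩ := hN.indep_iff_injOn.1 hX
  rw [← hinj.encard_image]
  exact encard_le_encard (image_subset_iff.2 fun a ha => (partOf_spec (hN.1 ▸ hXE ha)).1)

theorem IsPartitionMatroid.reduction_of_forall_subset (hN : N.IsPartitionMatroid P)
    (hN' : N'.IsPartitionMatroid Q) (hE : N'.E = N.E) (hPQ : ∀ c ∈ P, ∃ d ∈ Q, c ⊆ d) :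
    N'.Reduction N := by
  refine ⟨hE, fun X hX => (hN.2.2 X).2 ⟨hE ▸ ((hN'.2.2 X).1 hX).1, fun c hc => ?_⟩⟩
  obtain ⟨d, hd, hcd⟩ := hPQ c hc
  exact (encard_le_encard (inter_subset_inter_right X hcd)).trans (((hN'.2.2 X).1 hX).2 d hd)

theorem Reduction.trans {L : Matroid α} (hNM : N.Reduction M) (hML : M.Reduction L) :
    N.Reduction L :=
  ⟨hNM.1.trans hML.1, fun I hI => hML.2 I (hNM.2 I hI)⟩

theorem exists_isColorable (hfin : M.E.Finite) (hloopless : ∀ e ∈ M.E, M.Indep {e}) :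
    ∃ m, M.IsColorable m := by
  have := hfin.to_subtype
  let e := Finite.equivFin M.E
  refine ⟨Nat.card M.E, fun i => {(e.symm i : α)}, fun i => hloopless _ (e.symm i).2, ?_, ?_⟩
  · rw [iUnion_singleton_eq_range, range_comp' Subtype.val e.symm, e.symm.surjective.range_eq,
      image_univ, Subtype.range_coe]
  · exact fun i j hij => disjoint_singleton.2 fun h => hij (e.symm.injective (Subtype.ext h))

theorem isColorable_chi (h : ∃ m, M.IsColorable m) : M.IsColorable M.chi :=
  Nat.sInf_mem h

theorem chi_le_of_isColorable (h : M.IsColorable m) : M.chi ≤ m :=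
  Nat.sInf_le h

theorem Reduction.isColorable (hNM : N.Reduction M) (h : N.IsColorable m) : M.IsColorable m :=
  let ⟨I, hI, hU, hdisj⟩ := h
  ⟨I, fun i => hNM.2 _ (hI i), hU.trans hNM.1, hdisj⟩

theorem IsColorable.encard_ground_le (h : M.IsColorable m) {k : ℕ∞}
    (hk : ∀ I, M.Indep I → I.encard ≤ k) : M.E.encard ≤ m * k := by
  obtain ⟨I, hI, hU, -⟩ := h
  calc M.E.encard = (⋃ i, I i).encard := by rw [hU]
    _ ≤ ∑ i, (I i).encard := encard_iUnion_le_of_fintype I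
    _ ≤ ∑ _i : Fin m, k := Finset.sum_le_sum fun i _ => hk _ (hI i)
    _ = m * k := by simp

end Matroid

theorem statement_19_general (M : Matroid α) (hfin : M.E.Finite)
    (hloopless : ∀ e ∈ M.E, M.Indep {e})
    (hred : ∃ (N : Matroid α) (P : Set (Set α)), N.IsPartitionMatroid P ∧
      N.Reduction M ∧ ∀ c ∈ P, c.encard ≤ ((2 * M.chi : ℕ) : ℕ∞))
    (k : ℕ) (hk1 : 1 ≤ k)
    (M' : Matroid α) (hE' : M'.E = M.E)
    (hInd' : ∀ X, M'.Indep X ↔ M.Indep X ∧ X.encard ≤ (k : ℕ∞)) :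
    ∃ (N' : Matroid α) (P' : Set (Set α)), N'.IsPartitionMatroid P' ∧
      N'.Reduction M' ∧ ∀ c ∈ P', c.encard ≤ ((2 * M'.chi : ℕ) : ℕ∞) := by
  obtain ⟨N, P, hNP, hNM, hP⟩ := hred
  have hPE : ⋃₀ P = M'.E := hNP.1.trans (hNM.1.trans hE'.symm)
  have hM'M : M'.Reduction M := ⟨hE', fun X hX => ((hInd' X).1 hX).1⟩
  have hcol : M'.IsColorable M'.chi :=
    Matroid.isColorable_chi <| Matroid.exists_isColorable (hE' ▸ hfin)
      fun e he => (hInd' _).2 ⟨hloopless e (hE' ▸ he), by simpa using hk1⟩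
  have hchi : M.chi ≤ M'.chi := Matroid.chi_le_of_isColorable (hM'M.isColorable hcol)
  have hP' : ∀ c ∈ P, c.encard ≤ ((2 * M'.chi : ℕ) : ℕ∞) :=
    fun c hc => (hP c hc).trans (by gcongr)
  obtain ⟨Q, hQP, hQ, hPQ, hQsize, hQsum⟩ := exists_coarsening_pairwise_encard_add_gt
    (hNP.pairwiseDisjoint.finite_of_finite_sUnion (hPE ▸ hE' ▸ hfin)) hNP.pairwiseDisjoint hP'
  have hQk : Q.encard ≤ k := encard_le_of_pairwise_encard_add_gt hQ hk1
    (hQP.trans hPE ▸ hcol.encard_ground_le fun X hX => ((hInd' X).1 hX).2) hQsum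
  obtain ⟨N', hN'⟩ := Matroid.exists_isPartitionMatroid hQ
  have hN'N : N'.Reduction N := hNP.reduction_of_forall_subset hN'
    (hN'.1.symm.trans (hQP.trans hNP.1)) hPQ
  refine ⟨N', Q, hN', ⟨?_, fun X hX => (hInd' X).2 ⟨?_, ?_⟩⟩, hQsize⟩
  · rw [← hN'.1, hQP, hPE]
  · exact (hN'N.trans hNM).2 X hX
  · exact (hN'.encard_le_of_indep hX).trans hQk

/-- The family of matroids `M` reducible to a `2χ(M)`-colorable partition matroid is
closed under truncation: if `M` reduces to a `2χ(M)`-colorable partition matroid and `M'`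
is the `k`-truncation of `M` (for `1 ≤ k ≤ rank M`), then `M'` reduces to a
`2χ(M')`-colorable partition matroid. -/
theorem statement_19 (M : Matroid α) (hfin : M.E.Finite)
    (hloopless : ∀ e ∈ M.E, M.Indep {e})
    (hred : ∃ (N : Matroid α) (P : Set (Set α)), N.IsPartitionMatroid P ∧
      N.Reduction M ∧ ∀ c ∈ P, c.encard ≤ ((2 * M.chi : ℕ) : ℕ∞))
    (k : ℕ) (hk1 : 1 ≤ k) (hk2 : (k : ℕ∞) ≤ M.rkE)
    (M' : Matroid α) (hE' : M'.E = M.E)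
    (hInd' : ∀ X, M'.Indep X ↔ M.Indep X ∧ X.encard ≤ (k : ℕ∞)) :
    ∃ (N' : Matroid α) (P' : Set (Set α)), N'.IsPartitionMatroid P' ∧
      N'.Reduction M' ∧ ∀ c ∈ P', c.encard ≤ ((2 * M'.chi : ℕ) : ℕ∞) :=
  statement_19_general M hfin hloopless hred k hk1 M' hE' hInd'
end
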